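/- arXiv:2602.18302 — 5 statements merged into one kernel-verified Lean document; each statement's English description precedes it below -/
import Mathlib

section
/- Let β, γ ∈ ℂ be nonzero, let δ ∈ ℂ be nonzero and transcendental over ℚ, and define f(x) = x + β and g(x) = x/(γx + δ). Let c₁, c₂ ∈ ℂ(x) be rational functions such that c₁ ≠ f^m in ℂ(x) for every integer m ≥ 1 and c₂ ≠ g^n in ℂ(x) for every integer n ≥ 1. Then the set of λ ∈ ℂ that are not poles of c₁ or c₂ and for which there exist integers m, n ≥ 1 such that f^m(λ) = c₁(λ) and such that the orbit λ, g(λ), …, g^(n−1)(λ) avoids the pole −δ/γ and g^n(λ) = c₂(λ), is finite. -/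
/-!
If `λ` lies in the set, with witnesses `m` and `n`, then `c₁(λ) = λ + mβ` and
`c₂(λ) = λ / (γ(1 + δ + ⋯ + δⁿ⁻¹)λ + δⁿ)`, so `m = u(λ)` and `δⁿ = v(λ)` for two rational
functions `u`, `v` that do not depend on `λ`. Two rational functions are algebraically dependent,
hence `Q(m, δⁿ) = 0` for a fixed nonzero `Q ∈ ℂ[x, y]`. A `ℚ(δ)`-linear functional on `ℂ` that does
not kill all coefficients of `Q`, followed by clearing denominators, turns this into a nontrivial
relation with coefficients in `ℚ[δ]`; as `δ` is transcendental it is an identity in `ℚ[z]` between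
the `zⁿᵗ`, which separate once `n` exceeds the degrees of the coefficients. So for large `n` only
finitely many `m` occur. Since `c₁ ≠ fᵐ` and `c₂ ≠ gⁿ`, each value of `m` and each value of `n`
is attained by only finitely many `λ`, and the set is finite.
-/

open Polynomial Finset
open scoped IntermediateField

theorem Polynomial.exists_ne_zero_sum_smul_eq_zero {K ι : Type*} [Field K] [Fintype ι]
    (P : ι → K[X]) {n : ℕ} (hP : ∀ i, P i ∈ degreeLT K n) (hn : n < Fintype.card ι) :
    ∃ q : ι → K, q ≠ 0 ∧ ∑ i, q i • P i = 0 := by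
  have hdep : ¬ LinearIndependent K (fun i => (⟨P i, hP i⟩ : degreeLT K n)) := fun h => by
    have := h.fintype_card_le_finrank
    rw [(degreeLTEquiv K n).finrank_eq, Module.finrank_fin_fun] at this
    omega
  obtain ⟨q, hsum, i, hi⟩ := Fintype.not_linearIndependent_iff.mp hdep
  exact ⟨q, Function.ne_iff.mpr ⟨i, hi⟩, by simpa using congrArg Subtype.val hsum⟩

theorem Polynomial.exists_relation_of_eval_eq_mul {K : Type*} [Field K] (U₁ U₂ V₁ V₂ : K[X]) :
    ∃ (N : ℕ) (q : Fin N × Fin N → K), q ≠ 0 ∧ ∀ x a b : K, U₂.eval x ≠ 0 → V₂.eval x ≠ 0 →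
      U₁.eval x = a * U₂.eval x → V₁.eval x = b * V₂.eval x →
      ∑ p, q p * a ^ (p.1 : ℕ) * b ^ (p.2 : ℕ) = 0 := by
  set d := U₁.natDegree + U₂.natDegree + V₁.natDegree + V₂.natDegree
  -- the `N²` products below have `natDegree ≤ 2 (N - 1) d < N² - 1`, so they are dependent
  set N := 2 * d + 2
  have hdeg : ∀ i j : ℕ, i < N → j < N →
      (U₁ ^ i * U₂ ^ (N - 1 - i) * (V₁ ^ j * V₂ ^ (N - 1 - j))).natDegree ≤ 2 * (N - 1) * d := by
    intro i j hi hj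
    refine (natDegree_mul_le_of_le
      (natDegree_mul_le_of_le (natDegree_pow_le_of_le (m := d) _ ?_)
        (natDegree_pow_le_of_le (m := d) _ ?_))
      (natDegree_mul_le_of_le (natDegree_pow_le_of_le (m := d) _ ?_)
        (natDegree_pow_le_of_le (m := d) _ ?_))).trans ?_
    all_goals try omega
    rw [← add_mul, ← add_mul, Nat.add_sub_cancel' (by omega), Nat.add_sub_cancel' (by omega)]
    lia
  obtain ⟨q, hq, hsum⟩ := exists_ne_zero_sum_smul_eq_zero (n := 2 * (N - 1) * d + 1)
    (fun p : Fin N × Fin N =>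
      U₁ ^ (p.1 : ℕ) * U₂ ^ (N - 1 - p.1) * (V₁ ^ (p.2 : ℕ) * V₂ ^ (N - 1 - p.2)))
    (fun p => mem_degreeLT.mpr <| (degree_le_of_natDegree_le (hdeg _ _ p.1.isLt p.2.isLt)).trans_lt
      (by exact_mod_cast Nat.lt_succ_self _))
    (by
      simp only [Fintype.card_prod, Fintype.card_fin, N, show 2 * d + 2 - 1 = 2 * d + 1 by omega]
      nlinarith)
  refine ⟨N, q, hq, fun x a b hU hV ha hb => ?_⟩
  have hpow : ∀ (c u : K) (i : Fin N),
      (c * u) ^ (i : ℕ) * u ^ (N - 1 - i) = c ^ (i : ℕ) * u ^ (N - 1) := fun c u i => by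
    rw [mul_pow, mul_assoc, pow_mul_pow_sub _ (by omega)]
  have := congrArg (eval x) hsum
  simp only [eval_finsetSum, eval_smul, eval_mul, eval_pow, ha, hb, hpow, smul_eq_mul,
    eval_zero] at this
  have hfactor : (∑ p, q p * a ^ (p.1 : ℕ) * b ^ (p.2 : ℕ)) *
      (U₂.eval x ^ (N - 1) * V₂.eval x ^ (N - 1)) = 0 := by
    rw [← this, sum_mul]; exact sum_congr rfl fun p _ => by ring
  exact (mul_eq_zero.mp hfactor).resolve_right (mul_ne_zero (pow_ne_zero _ hU) (pow_ne_zero _ hV))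

theorem Polynomial.eq_zero_of_sum_mul_X_pow_eq_zero {R : Type*} [CommRing R] [Nontrivial R]
    {n : ℕ} : ∀ {N : ℕ} (P : Fin N → R[X]), (∀ t, P t ∈ degreeLT R n) →
      ∑ t, P t * X ^ (n * t) = 0 → P = 0
  | 0, P, _, _ => Subsingleton.elim _ _
  | N + 1, P, hP, h => by
    have hsplit : P 0 + X ^ n * ∑ t : Fin N, P t.succ * X ^ (n * t) = 0 := by
      rw [← h, Fin.sum_univ_succ, mul_sum]
      simp only [Fin.val_zero, mul_zero, pow_zero, mul_one, Fin.val_succ, mul_add, pow_add]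
      congr 1; exact sum_congr rfl fun t _ => by ring
    obtain ⟨hrest, h0⟩ := div_modByMonic_unique (f := 0) _ _ (monic_X_pow n)
      ⟨hsplit, by rw [degree_X_pow]; exact mem_degreeLT.mp (hP 0)⟩
    rw [zero_divByMonic] at hrest
    rw [zero_modByMonic] at h0
    have := eq_zero_of_sum_mul_X_pow_eq_zero (fun t => P t.succ) (fun t => hP _) hrest.symm
    funext t
    cases t using Fin.cases with
    | zero => exact h0.symm
    | succ t => exact congrFun this t

theorem eq_zero_of_forall_sum_mul_natCast_pow_eq_zero {R : Type*} [CommRing R]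
    [IsDomain R] [CharZero R] {N : ℕ} (a : Fin N → R) {M : Set ℕ} (hM : M.Infinite)
    (h : ∀ m ∈ M, ∑ i, a i * (m : R) ^ (i : ℕ) = 0) : a = 0 := by
  set F : R[X] := ∑ i, C (a i) * X ^ (i : ℕ)
  have hF : F = 0 := F.eq_zero_of_infinite_isRoot <|
    (hM.image Nat.cast_injective.injOn).mono <| by
      rintro _ ⟨m, hm, rfl⟩
      simpa [F, eval_finsetSum] using h m hm
  funext i
  simpa [F, finsetSum_coeff, coeff_C_mul_X_pow, Fin.val_inj] using congrArg (coeff · i) hF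

theorem Polynomial.eq_zero_of_forall_sum_mul_natCast_pow_mul_X_pow_eq_zero {R : Type*}
    [CommRing R] [IsDomain R] [CharZero R] {N : ℕ} (w : Fin N × Fin N → R[X]) {M : Set ℕ}
    (hM : M.Infinite) (h : ∀ m ∈ M, ∃ n, (∀ p, w p ∈ degreeLT R n) ∧
      ∑ p, w p * (m : R[X]) ^ (p.1 : ℕ) * X ^ (n * p.2) = 0) : w = 0 := by
  have hcol : ∀ t, ∀ m ∈ M, ∑ i, w (i, t) * (m : R[X]) ^ (i : ℕ) = 0 := by
    intro t m hm
    obtain ⟨n, hdeg, hsum⟩ := h m hm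
    refine congrFun (eq_zero_of_sum_mul_X_pow_eq_zero (n := n)
      (fun t => ∑ i, w (i, t) * (m : R[X]) ^ (i : ℕ)) (fun t => ?_) ?_) t
    · refine Submodule.sum_mem _ fun i _ => ?_
      simpa [smul_eq_C_mul, mul_comm] using Submodule.smul_mem _ ((m : R) ^ (i : ℕ)) (hdeg (i, t))
    · rw [← hsum, Fintype.sum_prod_type_right]
      simp only [sum_mul]
  funext ⟨i, t⟩
  exact congrFun (eq_zero_of_forall_sum_mul_natCast_pow_eq_zero (fun i => w (i, t)) hM (hcol t)) i

theorem IntermediateField.exists_common_denom {F E ι : Type*} [Field F] [Field E]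
    [Algebra F E] [Fintype ι] {α : E} (x : ι → F⟮α⟯) :
    ∃ b : F[X], aeval α b ≠ 0 ∧ ∀ i, ∃ a : F[X], aeval α a = aeval α b * x i := by
  classical
  have h : ∀ i, ∃ a b : F[X], aeval α b ≠ 0 ∧ aeval α a = aeval α b * x i := by
    intro i
    obtain ⟨a, b, hab⟩ := (mem_adjoin_simple_iff F (x i : E)).mp (x i).2
    by_cases hb : aeval α b = 0
    · exact ⟨0, 1, by simp, by simp [hab, hb]⟩
    · exact ⟨a, b, hb, by rw [hab, mul_div_cancel₀ _ hb]⟩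
  choose a b hb hab using h
  refine ⟨∏ i, b i, by simpa [map_prod] using prod_ne_zero_iff.mpr fun i _ => hb i,
    fun i => ⟨a i * ∏ j ∈ univ.erase i, b j, ?_⟩⟩
  rw [map_mul, map_prod, hab, map_prod,
    ← mul_prod_erase univ (fun j => aeval α (b j)) (mem_univ i)]
  ring

theorem Transcendental.exists_polynomial_relation {F E ι : Type*} [Field F] [Field E]
    [Algebra F E] [Fintype ι] {δ : E} (htr : Transcendental F δ) {q : ι → E} (hq : q ≠ 0) :
    ∃ w : ι → F[X], w ≠ 0 ∧
      ∀ c : ι → F[X], ∑ i, q i * Polynomial.aeval δ (c i) = 0 → ∑ i, w i * c i = 0 := by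
  obtain ⟨i₀, hi₀⟩ := Function.ne_iff.mp hq
  obtain ⟨φ, hφ⟩ := Module.Projective.exists_dual_ne_zero F⟮δ⟯ hi₀
  obtain ⟨b, hb, ha⟩ := IntermediateField.exists_common_denom fun i => φ (q i)
  choose w hw using ha
  refine ⟨w, Function.ne_iff.mpr ⟨i₀, fun h => ?_⟩, fun c hc => ?_⟩
  · have := hw i₀
    rw [h, Pi.zero_apply, map_zero, eq_comm] at this
    exact mul_ne_zero hb (by simpa using hφ) this
  · set θ := IntermediateField.AdjoinSimple.gen F δ
    have hθ : ∀ i, algebraMap F⟮δ⟯ E (Polynomial.aeval θ (c i)) = Polynomial.aeval δ (c i) :=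
      fun i => by rw [← aeval_algebraMap_apply, IntermediateField.AdjoinSimple.algebraMap_gen]
    have hφc : φ (∑ i, Polynomial.aeval θ (c i) • q i) = 0 := by
      rw [← map_zero φ, ← hc]
      exact congrArg φ (sum_congr rfl fun i _ => by rw [Algebra.smul_def, hθ, mul_comm])
    apply transcendental_iff_injective.mp htr
    calc Polynomial.aeval δ (∑ i, w i * c i)
        = Polynomial.aeval δ b * algebraMap F⟮δ⟯ E (φ (∑ i, Polynomial.aeval θ (c i) • q i)) := by
          simp only [map_sum, map_mul, hw, map_smul, smul_eq_mul, mul_sum, hθ,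
            IntermediateField.algebraMap_apply]
          exact sum_congr rfl fun i _ => by ring
      _ = Polynomial.aeval δ 0 := by rw [hφc]; simp

theorem Transcendental.exists_finite_setOf_sum_mul_pow_eq_zero {F E : Type*} [Field F]
    [CharZero F] [Field E] [Algebra F E] {δ : E} (htr : Transcendental F δ) {N : ℕ}
    {q : Fin N × Fin N → E} (hq : q ≠ 0) : ∃ Δ : ℕ,
      {m : ℕ | ∃ n, Δ < n ∧ ∑ p, q p * (m : E) ^ (p.1 : ℕ) * (δ ^ n) ^ (p.2 : ℕ) = 0}.Finite := by
  obtain ⟨w, hw0, hw⟩ := htr.exists_polynomial_relation hq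
  refine ⟨univ.sup fun p => (w p).natDegree, Set.not_infinite.mp fun hM => hw0 <|
    eq_zero_of_forall_sum_mul_natCast_pow_mul_X_pow_eq_zero w hM ?_⟩
  rintro m ⟨n, hn, hrel⟩
  refine ⟨n, fun p => mem_degreeLT.mpr ((degree_le_natDegree).trans_lt ?_), ?_⟩
  · exact_mod_cast (le_sup (f := fun p => (w p).natDegree) (mem_univ p)).trans_lt hn
  · have := hw (fun p => (m : F[X]) ^ (p.1 : ℕ) * X ^ (n * p.2)) (by
      rw [← hrel]; exact sum_congr rfl fun p _ => by simp [pow_mul, mul_assoc])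
    rw [← this]; exact sum_congr rfl fun p _ => by ring

theorem Set.Finite.of_subset_biUnion_fiber {α : Type*} {R : Set (ℕ × ℕ)} {Z₁ Z₂ : ℕ → Set α}
    {s : Set α} (Δ : ℕ) (hs : s ⊆ ⋃ p ∈ R, Z₁ p.1 ∩ Z₂ p.2) (hZ₁ : ∀ p ∈ R, (Z₁ p.1).Finite)
    (hZ₂ : ∀ p ∈ R, (Z₂ p.2).Finite) (hR : {m | ∃ n, Δ < n ∧ (m, n) ∈ R}.Finite) :
    s.Finite := by
  have hsmall : (⋃ n ∈ Prod.snd '' {p ∈ R | p.2 ≤ Δ}, Z₂ n).Finite :=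
    ((Set.finite_Iic Δ).subset (by rintro _ ⟨p, hp, rfl⟩; exact hp.2)).biUnion'
      (by rintro _ ⟨p, hp, rfl⟩; exact hZ₂ p hp.1)
  have hlarge : (⋃ m ∈ {m | ∃ n, Δ < n ∧ (m, n) ∈ R}, Z₁ m).Finite :=
    hR.biUnion' (by rintro m ⟨n, -, hmn⟩; exact hZ₁ _ hmn)
  refine (hsmall.union hlarge).subset fun x hx => ?_
  obtain ⟨p, hp, hx₁, hx₂⟩ : ∃ p ∈ R, x ∈ Z₁ p.1 ∧ x ∈ Z₂ p.2 := by
    simpa only [Set.mem_iUnion, Set.mem_inter_iff, exists_prop] using hs hx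
  rcases le_or_gt p.2 Δ with h | h
  · exact Or.inl (Set.mem_biUnion ⟨p, ⟨hp, h⟩, rfl⟩ hx₂)
  · exact Or.inr (Set.mem_biUnion ⟨p.2, h, hp⟩ hx₁)

noncomputable def mobiusIterateDenom {R : Type*} [CommRing R] (γ δ : R) (n : ℕ) : R[X] :=
  C (γ * ∑ i ∈ range n, δ ^ i) * X + C (δ ^ n)

section Mobius

variable {R : Type*} [CommRing R] (γ δ : R)

theorem mobiusIterateDenom_zero : mobiusIterateDenom γ δ 0 = 1 := by simp [mobiusIterateDenom]

theorem mobiusIterateDenom_succ (n : ℕ) :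
    mobiusIterateDenom γ δ (n + 1) = C γ * X + C δ * mobiusIterateDenom γ δ n := by
  simp only [mobiusIterateDenom, geom_sum_succ, pow_succ, map_add, map_mul, map_one]
  ring

theorem mobiusIterateDenom_ne_zero [Nontrivial R] [NoZeroDivisors R] (hδ : δ ≠ 0) (n : ℕ) :
    mobiusIterateDenom γ δ n ≠ 0 := fun h => by
  simpa [mobiusIterateDenom, hδ] using congrArg (eval 0) h

variable {F : Type*} [Field F] {γ δ : F} {x : F} {n : ℕ}

theorem mobius_iterate_apply (h : ∀ k < n, (mobiusIterateDenom γ δ k).eval x ≠ 0) :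
    (fun r => r / (γ * r + δ))^[n] x = x / (mobiusIterateDenom γ δ n).eval x := by
  induction n with
  | zero => simp [mobiusIterateDenom_zero]
  | succ k ih =>
    have hk := h k (by omega)
    rw [Function.iterate_succ_apply', ih fun j hj => h j (by omega), mobiusIterateDenom_succ,
      mul_div_assoc', div_add' _ _ _ hk, div_div_div_cancel_right₀ hk]
    simp only [eval_add, eval_mul, eval_C, eval_X]

theorem mobius_iterate_mul_eval_mobiusIterateDenom
    (h : ∀ i < n, γ * (fun r => r / (γ * r + δ))^[i] x + δ ≠ 0) :
    (fun r => r / (γ * r + δ))^[n] x * (mobiusIterateDenom γ δ n).eval x = x := by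
  have hD : ∀ k ≤ n, (mobiusIterateDenom γ δ k).eval x ≠ 0 := by
    intro k hk
    induction k using Nat.strong_induction_on with
    | _ k ih =>
      cases k with
      | zero => simp [mobiusIterateDenom_zero]
      | succ k =>
        have hk := ih k (by omega) (by omega)
        have hstep : (mobiusIterateDenom γ δ (k + 1)).eval x =
            (mobiusIterateDenom γ δ k).eval x * (γ * (fun r => r / (γ * r + δ))^[k] x + δ) := by
          rw [mobius_iterate_apply fun j hj => ih j (by omega) (by omega), mobiusIterateDenom_succ]
          simp only [eval_add, eval_mul, eval_C, eval_X]
          field_simp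
        rw [hstep]
        exact mul_ne_zero hk (h k (by omega))
  rw [mobius_iterate_apply fun k hk => hD k hk.le, div_mul_cancel₀ _ (hD n le_rfl)]

end Mobius

namespace RatFunc

variable {K : Type*} [Field K] (c : RatFunc K) {x : K}

theorem eval_id_eq_div : c.eval (RingHom.id K) x = c.num.eval x / c.denom.eval x := rfl

theorem mobius_iterate_X {γ δ : K} (hδ : δ ≠ 0) (n : ℕ) :
    (fun r : RatFunc K => r / (C γ * r + C δ))^[n] X =
      algebraMap K[X] (RatFunc K) Polynomial.X /
        algebraMap K[X] (RatFunc K) (mobiusIterateDenom γ δ n) := by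
  have heval : ∀ k, (mobiusIterateDenom (C γ) (C δ) k).eval X =
      algebraMap K[X] (RatFunc K) (mobiusIterateDenom γ δ k) := fun k => by
    simp [mobiusIterateDenom, map_sum, algebraMap_C, algebraMap_X, Polynomial.eval_finsetSum]
  rw [mobius_iterate_apply fun k _ =>
    heval k ▸ algebraMap_ne_zero (mobiusIterateDenom_ne_zero γ δ hδ k), heval, algebraMap_X]

theorem finite_setOf_eval_mul_eq {p q : K[X]} (hq : q ≠ 0)
    (h : c ≠ algebraMap K[X] (RatFunc K) p / algebraMap K[X] (RatFunc K) q) :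
    {x | c.denom.eval x ≠ 0 ∧ c.eval (RingHom.id K) x * q.eval x = p.eval x}.Finite := by
  have hne : c.num * q - c.denom * p ≠ 0 := fun h0 => h <| by
    rw [← c.num_div_denom, div_eq_div_iff (algebraMap_ne_zero c.denom_ne_zero)
      (algebraMap_ne_zero hq), ← map_mul, ← map_mul, sub_eq_zero.mp h0, mul_comm]
  refine (finite_setOfPred_isRoot hne).subset fun x ⟨hx, hxe⟩ => ?_
  rw [eval_id_eq_div, div_mul_eq_mul_div, div_eq_iff hx] at hxe
  simp only [Set.mem_ofPred_eq, IsRoot, Polynomial.eval_sub, Polynomial.eval_mul, hxe]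
  ring

theorem finite_setOf_eval_eq_add_iterate {b : K} {m : ℕ} (hc : c ≠ (fun r => r + C b)^[m] X) :
    {x | c.denom.eval x ≠ 0 ∧ c.eval (RingHom.id K) x = x + m * b}.Finite := by
  have := c.finite_setOf_eval_mul_eq one_ne_zero (p := Polynomial.X + Polynomial.C (m * b))
    (by simpa [algebraMap_X, algebraMap_C, nsmul_eq_mul] using hc)
  simp only [Polynomial.eval_one, mul_one, Polynomial.eval_add, Polynomial.eval_X,
    Polynomial.eval_C] at this
  exact this

theorem finite_setOf_eval_mul_mobiusIterateDenom_eq {γ δ : K} (hδ : δ ≠ 0) {n : ℕ}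
    (hc : c ≠ (fun r => r / (C γ * r + C δ))^[n] X) :
    {x | c.denom.eval x ≠ 0 ∧
      c.eval (RingHom.id K) x * (mobiusIterateDenom γ δ n).eval x = x}.Finite := by
  simpa using c.finite_setOf_eval_mul_eq (mobiusIterateDenom_ne_zero γ δ hδ n)
    (p := Polynomial.X) (mobius_iterate_X hδ n ▸ hc)

variable {c}

theorem eval_num_sub_X_mul_denom {a b : K} (hx : c.denom.eval x ≠ 0)
    (h : c.eval (RingHom.id K) x = x + a * b) :
    (c.num - Polynomial.X * c.denom).eval x = a * (Polynomial.C b * c.denom).eval x := by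
  rw [eval_id_eq_div, div_eq_iff hx] at h
  simp only [Polynomial.eval_sub, Polynomial.eval_mul, Polynomial.eval_X, Polynomial.eval_C, h]
  ring

theorem eval_X_mul_eq_pow_mul_eval {γ δ : K} {n : ℕ} (hx : c.denom.eval x ≠ 0)
    (h : c.eval (RingHom.id K) x * (mobiusIterateDenom γ δ n).eval x = x) :
    (Polynomial.X * (Polynomial.C (δ - 1) * c.denom + Polynomial.C γ * c.num)).eval x =
      δ ^ n * (c.num * (Polynomial.C γ * Polynomial.X + Polynomial.C (δ - 1))).eval x := by
  rw [eval_id_eq_div, div_mul_eq_mul_div, div_eq_iff hx] at h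
  simp only [mobiusIterateDenom, Polynomial.eval_add, Polynomial.eval_mul, Polynomial.eval_X,
    Polynomial.eval_C] at h ⊢
  linear_combination (1 - δ) * h + γ * x * c.num.eval x * geom_sum_mul δ n

theorem eval_num_ne_zero (h : c.eval (RingHom.id K) x ≠ 0) :
    c.num.eval x ≠ 0 :=
  fun h0 => h (by rw [eval_id_eq_div, h0, zero_div])

end RatFunc

/-- Proposition 2.8: finiteness when `δ` is transcendental,
`f(x) = x + β`, `g(x) = x/(γx + δ)`. -/
theorem stmt7 (β γ δ : ℂ) (hβ : β ≠ 0) (hγ : γ ≠ 0) (hδ : δ ≠ 0)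
    (htr : Transcendental ℚ δ)
    (f g : ℂ → ℂ)
    (hf : ∀ x, f x = x + β) (hg : ∀ x, g x = x / (γ * x + δ))
    (c₁ c₂ : RatFunc ℂ)
    (hc₁ : ∀ m : ℕ, 1 ≤ m →
      c₁ ≠ (fun r : RatFunc ℂ => r + RatFunc.C β)^[m] RatFunc.X)
    (hc₂ : ∀ n : ℕ, 1 ≤ n →
      c₂ ≠ (fun r : RatFunc ℂ => r / (RatFunc.C γ * r + RatFunc.C δ))^[n] RatFunc.X) :
    {l : ℂ | c₁.denom.eval l ≠ 0 ∧ c₂.denom.eval l ≠ 0 ∧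
        ∃ m n : ℕ, 1 ≤ m ∧ 1 ≤ n ∧
          f^[m] l = c₁.eval (RingHom.id ℂ) l ∧
          (∀ i < n, γ * g^[i] l + δ ≠ 0) ∧
          g^[n] l = c₂.eval (RingHom.id ℂ) l}.Finite := by
  obtain rfl : f = (· + β) := funext hf
  obtain rfl : g = fun r => r / (γ * r + δ) := funext hg
  -- at a point of the set, `m` and `δ ^ n` are the ratios of the first two and of the last two
  -- of these polynomials
  obtain ⟨N, q, hq, hrel⟩ := exists_relation_of_eval_eq_mul (c₁.num - X * c₁.denom)
    (C β * c₁.denom) (X * (C (δ - 1) * c₂.denom + C γ * c₂.num)) (c₂.num * (C γ * X + C (δ - 1)))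
  obtain ⟨Δ, hΔ⟩ := htr.exists_finite_setOf_sum_mul_pow_eq_zero hq
  refine Set.Finite.of_sdiff (t := {0, (1 - δ) / γ}) (Set.Finite.of_subset_biUnion_fiber Δ
    (R := {p | 1 ≤ p.1 ∧ 1 ≤ p.2 ∧ ∑ i, q i * (p.1 : ℂ) ^ (i.1 : ℕ) * (δ ^ p.2) ^ (i.2 : ℕ) = 0})
    (Z₁ := fun m => {x | c₁.denom.eval x ≠ 0 ∧ c₁.eval (RingHom.id ℂ) x = x + m * β})
    (Z₂ := fun n => {x | c₂.denom.eval x ≠ 0 ∧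
      c₂.eval (RingHom.id ℂ) x * (mobiusIterateDenom γ δ n).eval x = x}) ?_
    (fun p hp => c₁.finite_setOf_eval_eq_add_iterate (hc₁ p.1 hp.1))
    (fun p hp => c₂.finite_setOf_eval_mul_mobiusIterateDenom_eq hδ (hc₂ p.2 hp.2.1))
    (hΔ.subset fun m ⟨n, hn, _, _, hmn⟩ => ⟨n, hn, hmn⟩)) (Set.toFinite _)
  rintro x ⟨⟨hx₁, hx₂, m, n, hm, hn, hfm, horbit, hgn⟩, hxE⟩
  have hZ₁ : c₁.eval (RingHom.id ℂ) x = x + m * β := by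
    rw [← hfm, add_right_iterate_apply, nsmul_eq_mul]
  have hZ₂ : c₂.eval (RingHom.id ℂ) x * (mobiusIterateDenom γ δ n).eval x = x :=
    hgn ▸ mobius_iterate_mul_eval_mobiusIterateDenom horbit
  have hx0 : x ≠ 0 := fun h => hxE (Or.inl h)
  have hxγ : γ * x + (δ - 1) ≠ 0 := fun h =>
    hxE (Or.inr (eq_div_of_mul_eq hγ (by linear_combination h)))
  refine Set.mem_biUnion (x := (m, n)) ⟨hm, hn, hrel x m (δ ^ n) ?_ ?_ ?_ ?_⟩
    ⟨⟨hx₁, hZ₁⟩, hx₂, hZ₂⟩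
  · simpa using ⟨hβ, hx₁⟩
  · simpa using ⟨RatFunc.eval_num_ne_zero (left_ne_zero_of_mul (hZ₂ ▸ hx0)), hxγ⟩
  · exact RatFunc.eval_num_sub_X_mul_denom hx₁ hZ₁
  · exact RatFunc.eval_X_mul_eq_pow_mul_eval hx₂ hZ₂
end

section
/- Let α ∈ ℂ be nonzero and algebraic over ℚ, and let β, γ ∈ ℂ. Define f(x) = αx + β and g(x) = x + γ. Then f and g do not generate a free semigroup under composition: there exist two distinct nonempty finite words in the letters f and g whose composites are equal as functions ℂ → ℂ. -/
/-!
With `f(x) = αx + β` and `g(x) = x + γ`, the word `g^{c₀} f g^{c₁} f ⋯ g^{c_{n-1}} f` acts as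
`x ↦ αⁿ x + β ∑ αⁱ + γ ∑ cᵢ αⁱ`, so two such words of the same length with coefficient vectors
`c ≠ c'` define the same map as soon as `∑ cᵢ αⁱ = ∑ c'ᵢ αⁱ`. Clearing denominators, `α` is a root
of a nonzero `p ∈ ℤ[X]`; taking for `c` and `c'` the positive and negative parts of the
coefficients of `p` gives such a pair.
-/

open Polynomial

def evalWord {X : Type*} (f g : X → X) (w : List Bool) : X → X :=
  (w.map fun b => if b then f else g).foldr (· ∘ ·) id

section evalWord

variable {X : Type*} (f g : X → X)

@[simp]
theorem evalWord_nil : evalWord f g [] = id := rfl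

@[simp]
theorem evalWord_cons (b : Bool) (w : List Bool) :
    evalWord f g (b :: w) = (if b then f else g) ∘ evalWord f g w := rfl

@[simp]
theorem evalWord_append (w w' : List Bool) :
    evalWord f g (w ++ w') = evalWord f g w ∘ evalWord f g w' := by
  induction w with
  | nil => rfl
  | cons b w ih => simp [ih, Function.comp_assoc]

@[simp]
theorem evalWord_replicate_false (a : ℕ) : evalWord f g (List.replicate a false) = g^[a] := by
  induction a with
  | zero => rfl
  | succ a ih => rw [List.replicate_succ, evalWord_cons, ih, Function.iterate_succ']; rfl

end evalWord

/-- The word `g^{c 0} f g^{c 1} f ⋯ g^{c (n-1)} f`, with `true` for `f` and `false` for `g`. -/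
def blockWord (c : ℕ → ℕ) : ℕ → List Bool
  | 0 => []
  | n + 1 => List.replicate (c 0) false ++ true :: blockWord (fun i => c (i + 1)) n

theorem blockWord_succ_ne_nil (c : ℕ → ℕ) (n : ℕ) : blockWord c (n + 1) ≠ [] := by
  simp [blockWord]

theorem replicate_false_append_true_inj {a a' : ℕ} {w w' : List Bool}
    (h : List.replicate a false ++ true :: w = List.replicate a' false ++ true :: w') :
    a = a' ∧ w = w' := by
  induction a generalizing a' with
  | zero => cases a' <;> simp_all [List.replicate_succ]
  | succ a ih =>
    cases a' with
    | zero => simp [List.replicate_succ] at h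
    | succ a' =>
      simp only [List.replicate_succ, List.cons_append, List.cons.injEq, true_and] at h
      exact (ih h).imp (congrArg _) id

theorem eq_of_blockWord_eq {c c' : ℕ → ℕ} {n : ℕ} (h : blockWord c n = blockWord c' n) :
    ∀ i < n, c i = c' i := by
  induction n generalizing c c' with
  | zero => simp
  | succ n ih =>
    obtain ⟨h₀, hrest⟩ := replicate_false_append_true_inj h
    rintro (_ | i) hi
    · exact h₀
    · exact ih hrest i (by omega)

theorem evalWord_blockWord {R : Type*} [CommSemiring R] (α β γ : R) (c : ℕ → ℕ) (n : ℕ)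
    (x : R) :
    evalWord (fun x => α * x + β) (· + γ) (blockWord c n) x =
      α ^ n * x + β * ∑ i ∈ Finset.range n, α ^ i + γ * ∑ i ∈ Finset.range n, c i * α ^ i := by
  induction n generalizing c with
  | zero => simp [blockWord]
  | succ n ih =>
    simp only [blockWord, evalWord_append, evalWord_replicate_false, evalWord_cons,
      Function.comp_apply, add_right_iterate_apply, if_true, ih, Finset.sum_range_succ',
      nsmul_eq_mul, pow_succ', mul_left_comm _ α, ← Finset.mul_sum]
    ring

theorem sum_toNat_coeff_mul_pow_eq {A : Type*} [CommRing A] {p : ℤ[X]} {α : A}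
    (hp : aeval α p = 0) {n : ℕ} (hn : p.natDegree < n) :
    ∑ i ∈ Finset.range n, ((p.coeff i).toNat : A) * α ^ i =
      ∑ i ∈ Finset.range n, ((-p.coeff i).toNat : A) * α ^ i := by
  rw [← sub_eq_zero, ← Finset.sum_sub_distrib, ← hp, aeval_eq_sum_range' hn]
  refine Finset.sum_congr rfl fun i _ => ?_
  conv_rhs => rw [← (p.coeff i).toNat_sub_toNat_neg, zsmul_eq_mul]
  push_cast
  ring

theorem stmt9_general (α : ℂ) (halg : IsAlgebraic ℚ α) (β γ : ℂ)
    (f g : ℂ → ℂ)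
    (hf : ∀ x, f x = α * x + β) (hg : ∀ x, g x = x + γ) :
    ∃ w₁ w₂ : List Bool, w₁ ≠ [] ∧ w₂ ≠ [] ∧ w₁ ≠ w₂ ∧
      (w₁.map fun b => if b then f else g).foldr (· ∘ ·) id =
      (w₂.map fun b => if b then f else g).foldr (· ∘ ·) id := by
  obtain rfl : f = fun x => α * x + β := funext hf
  obtain rfl : g = (· + γ) := funext hg
  obtain ⟨p, hp0, hpα⟩ := (IsFractionRing.isAlgebraic_iff ℤ ℚ ℂ).mpr halg
  set c : ℕ → ℕ := fun i => (p.coeff i).toNat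
  set c' : ℕ → ℕ := fun i => (-p.coeff i).toNat
  refine ⟨blockWord c (p.natDegree + 1), blockWord c' (p.natDegree + 1),
    blockWord_succ_ne_nil _ _, blockWord_succ_ne_nil _ _, fun h => ?_, ?_⟩
  · have hlead := eq_of_blockWord_eq h p.natDegree p.natDegree.lt_succ_self
    have := leadingCoeff_ne_zero.mpr hp0
    simp only [c, c', leadingCoeff] at hlead this
    omega
  · funext x
    change evalWord _ _ _ x = evalWord _ _ _ x
    simp only [evalWord_blockWord, c, c', sum_toNat_coeff_mul_pow_eq hpα p.natDegree.lt_succ_self]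

/-- Proposition 2.12: when `α` is algebraic, `αx + β` and `x + γ` do not
generate a free semigroup under composition. -/
theorem stmt9 (α : ℂ) (hα : α ≠ 0) (halg : IsAlgebraic ℚ α) (β γ : ℂ)
    (f g : ℂ → ℂ)
    (hf : ∀ x, f x = α * x + β) (hg : ∀ x, g x = x + γ) :
    ∃ w₁ w₂ : List Bool, w₁ ≠ [] ∧ w₂ ≠ [] ∧ w₁ ≠ w₂ ∧
      (w₁.map fun b => if b then f else g).foldr (· ∘ ·) id =
      (w₂.map fun b => if b then f else g).foldr (· ∘ ·) id :=
  stmt9_general α halg β γ f g hf hg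
end

section
/- Let k be a positive integer and ξ ∈ ℂ a primitive k-th root of unity. Let d₁, d₂ be integers with d₁ > 1 and d₂ > 1, let d₃, d₄ be integers with d₃ ≥ 0 and d₄ ≥ 0, and let a, b be integers with 0 ≤ a < k and 0 ≤ b < k. Then for every natural number n satisfying d₁^n > max(d₃, d₄) and d₂^n > max(d₃, d₄), there exists x₀ ∈ ℂ with x₀^(d₁^n − d₃) = ξ^a and x₀^(d₂^n − d₄) = ξ^b if and only if k · gcd(d₂^n − d₄, d₁^n − d₃) divides b·(d₁^n − d₃) − a·(d₂^n − d₄) in ℤ. -/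
/-!
Put `g = gcd(M, N)`, `M = g M'`, `N = g N'`. In an algebraically closed field, a common solution
of `x ^ M = α` and `x ^ N = β` is, after extracting a `g`-th root, the same as a common solution
of `γ ^ M' = α` and `γ ^ N' = β`; since `M'` and `N'` are coprime, this exists exactly when
`α ^ N' = β ^ M'` (take `γ = α ^ u * β ^ v` with `u M' + v N' = 1`). For `α = ξ ^ a`, `β = ξ ^ b`
this says `k ∣ b M' - a N'`, i.e. `k g ∣ b M - a N`.
-/

theorem exists_zpow_eq_and_zpow_eq_iff_of_isCoprime {G₀ : Type*} [CommGroupWithZero G₀]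
    {α β : G₀} (hα : α ≠ 0) (hβ : β ≠ 0) {m n : ℤ} (hmn : IsCoprime m n) :
    (∃ γ : G₀, γ ^ m = α ∧ γ ^ n = β) ↔ α ^ n = β ^ m := by
  constructor
  · rintro ⟨γ, rfl, rfl⟩
    rw [← zpow_mul, ← zpow_mul, mul_comm]
  · intro h
    obtain ⟨u, v, huv⟩ := hmn
    refine ⟨α ^ u * β ^ v, ?_, ?_⟩
    · rw [mul_zpow, ← zpow_mul, ← zpow_mul, mul_comm v, zpow_mul β, ← h, ← zpow_mul,
        ← zpow_add₀ hα, mul_comm n, huv, zpow_one]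
    · rw [mul_zpow, ← zpow_mul, ← zpow_mul, mul_comm u, zpow_mul α, h, ← zpow_mul,
        ← zpow_add₀ hβ, mul_comm m, huv, zpow_one]

theorem exists_zpow_mul_eq_and_zpow_mul_eq_iff {K : Type*} [Field K] [IsAlgClosed K]
    {α β : K} {m n : ℤ} {g : ℕ} (hg : 0 < g) :
    (∃ x : K, x ^ (m * g) = α ∧ x ^ (n * g) = β) ↔ ∃ γ : K, γ ^ m = α ∧ γ ^ n = β := by
  constructor
  · rintro ⟨x, hxm, hxn⟩
    exact ⟨x ^ g, by rwa [← zpow_natCast, ← zpow_mul, mul_comm],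
      by rwa [← zpow_natCast, ← zpow_mul, mul_comm]⟩
  · rintro ⟨γ, hγm, hγn⟩
    obtain ⟨x, rfl⟩ := IsAlgClosed.exists_pow_nat_eq γ hg
    exact ⟨x, by rwa [mul_comm, zpow_mul, zpow_natCast],
      by rwa [mul_comm, zpow_mul, zpow_natCast]⟩

theorem exists_zpow_eq_and_zpow_eq_iff {K : Type*} [Field K] [IsAlgClosed K]
    {α β : K} (hα : α ≠ 0) (hβ : β ≠ 0) {m n : ℤ} (hg : 0 < Int.gcd m n) :
    (∃ x : K, x ^ m = α ∧ x ^ n = β) ↔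
      α ^ (n / Int.gcd m n) = β ^ (m / Int.gcd m n) := by
  have hcop : IsCoprime (m / Int.gcd m n) (n / Int.gcd m n) :=
    Int.isCoprime_iff_gcd_eq_one.2 (Int.gcd_div_gcd_div_gcd hg)
  conv_rhs => rw [← exists_zpow_eq_and_zpow_eq_iff_of_isCoprime hα hβ hcop,
    ← exists_zpow_mul_eq_and_zpow_mul_eq_iff hg]
  rw [Int.ediv_mul_cancel (Int.gcd_dvd_left ..), Int.ediv_mul_cancel (Int.gcd_dvd_right ..)]

namespace IsPrimitiveRoot

variable {K : Type*} [Field K] {ξ : K} {k : ℕ}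

theorem zpow_zpow_eq_zpow_zpow_iff (hξ : IsPrimitiveRoot ξ k) (hk : k ≠ 0) (a b m n : ℤ) :
    (ξ ^ a) ^ n = (ξ ^ b) ^ m ↔ (k : ℤ) ∣ b * m - a * n := by
  have hξ₀ : ξ ≠ 0 := hξ.ne_zero hk
  rw [← zpow_mul, ← zpow_mul, eq_comm, ← div_eq_one_iff_eq (zpow_ne_zero _ hξ₀),
    ← zpow_sub₀ hξ₀, hξ.zpow_eq_one_iff_dvd]

theorem exists_zpow_eq_and_zpow_eq_iff [IsAlgClosed K] (hξ : IsPrimitiveRoot ξ k) (hk : k ≠ 0)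
    {m n : ℤ} (hm : m ≠ 0) (a b : ℤ) :
    (∃ x : K, x ^ m = ξ ^ a ∧ x ^ n = ξ ^ b) ↔
      (k : ℤ) * (Int.gcd n m : ℤ) ∣ b * m - a * n := by
  have hξ₀ : ξ ≠ 0 := hξ.ne_zero hk
  have hg : 0 < Int.gcd m n := Int.gcd_pos_of_ne_zero_left n hm
  have hg' : (Int.gcd m n : ℤ) ≠ 0 := by exact_mod_cast hg.ne'
  rw [Int.gcd_comm n m,
    _root_.exists_zpow_eq_and_zpow_eq_iff (zpow_ne_zero _ hξ₀) (zpow_ne_zero _ hξ₀) hg,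
    hξ.zpow_zpow_eq_zpow_zpow_iff hk, ← mul_dvd_mul_iff_right hg', sub_mul,
    mul_assoc, mul_assoc, Int.ediv_mul_cancel (Int.gcd_dvd_left ..),
    Int.ediv_mul_cancel (Int.gcd_dvd_right ..)]

end IsPrimitiveRoot

theorem stmt11_general (k : ℕ) (hk : 0 < k) (ξ : ℂ) (hξ : IsPrimitiveRoot ξ k)
    (d₁ d₂ d₃ d₄ a b : ℤ) :
    ∀ n : ℕ, max d₃ d₄ < d₁ ^ n → max d₃ d₄ < d₂ ^ n →
      ((∃ x₀ : ℂ, x₀ ^ (d₁ ^ n - d₃) = ξ ^ a ∧ x₀ ^ (d₂ ^ n - d₄) = ξ ^ b) ↔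
        (k : ℤ) * (Int.gcd (d₂ ^ n - d₄) (d₁ ^ n - d₃) : ℤ) ∣
          b * (d₁ ^ n - d₃) - a * (d₂ ^ n - d₄)) := by
  intro n h₁ _
  exact hξ.exists_zpow_eq_and_zpow_eq_iff hk.ne'
    (sub_ne_zero.2 (lt_of_le_of_lt (le_max_left _ _) h₁).ne') a b

/-- Lemma 4.2: criterion for common solutions of two root-of-unity power equations. -/
theorem stmt11 (k : ℕ) (hk : 0 < k) (ξ : ℂ) (hξ : IsPrimitiveRoot ξ k)
    (d₁ d₂ d₃ d₄ a b : ℤ) (hd₁ : 1 < d₁) (hd₂ : 1 < d₂)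
    (hd₃ : 0 ≤ d₃) (hd₄ : 0 ≤ d₄)
    (ha : 0 ≤ a ∧ a < (k : ℤ)) (hb : 0 ≤ b ∧ b < (k : ℤ)) :
    ∀ n : ℕ, max d₃ d₄ < d₁ ^ n → max d₃ d₄ < d₂ ^ n →
      ((∃ x₀ : ℂ, x₀ ^ (d₁ ^ n - d₃) = ξ ^ a ∧ x₀ ^ (d₂ ^ n - d₄) = ξ ^ b) ↔
        (k : ℤ) * (Int.gcd (d₂ ^ n - d₄) (d₁ ^ n - d₃) : ℤ) ∣
          b * (d₁ ^ n - d₃) - a * (d₂ ^ n - d₄)) :=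
  stmt11_general k hk ξ hξ d₁ d₂ d₃ d₄ a b
end

section
/- Let a, b, c₁, c₂, d₃ be non-negative integers, let m be a positive integer and ξ ∈ ℂ a primitive m-th root of unity, and let d₁, d₂ be integers with d₁ > 1 and d₂ > 1. Define φ, ψ : ℂ → ℂ by φ(y) = ξ^a · y^(d₁) and ψ(y) = ξ^b · y^(d₂). Then the set { n ∈ ℕ : n ≥ 1 and there exists x ∈ ℂ with x ≠ 0 such that φ^n(x) = ξ^(c₁) · x^(d₃) and ψ^n(x) = ξ^(c₂) · x^(d₃) } is a finite union of arithmetic progressions. -/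
/-!
Unwinding the iterates, for `n > d₃` the condition asks for `x ≠ 0` with `x ^ D₁ = ξ ^ α` and
`x ^ D₂ = ξ ^ β`, where `Dᵢ = dᵢⁿ - d₃`; such an `x` exists iff `m · gcd(D₁, D₂) ∣ α D₂ - β D₁`.
Multiplying by `(d₁ - 1)(d₂ - 1)` clears the geometric sums in `α, β`, and the criterion splits
into one condition per prime `p`: `p ^ (e + min (v_p D₁) (v_p D₂))` divides
`F = A D₂ + B D₁ + C D₁ D₂`, where `e = v_p (m (d₁ - 1)(d₂ - 1))`. Each of these is eventually
periodic in `n`. While `v_p D₁` or `v_p D₂` stays bounded, the condition only depends on `d₁ⁿ, d₂ⁿ`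
modulo a fixed power of `p`, and these residues are eventually periodic. If `d₃ = 0`, the common
power of `p` in `d₁ⁿ, d₂ⁿ` factors out. Otherwise `D₁, D₂` can both be highly divisible by `p`
only if `p ∤ d₁ d₂`; then one compares `n` with a much deeper `n + ρ t`, `ρ` the common order of
`d₁, d₂` modulo `p ^ (e + 2)`, and expanding `dᵢ ^ (ρ t) = (1 + (dᵢ ^ ρ - 1)) ^ t` to first order
shows that the condition is the same for all such `n`. Finally, eventually periodic sets of
naturals are finite unions of arithmetic progressions.
-/

open Filter

def EventuallyPeriodic {α : Type*} (u : ℕ → α) : Prop :=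
  ∃ T, 0 < T ∧ ∀ᶠ n in atTop, u (n + T) = u n

namespace EventuallyPeriodic

variable {α β ι : Type*} {u : ℕ → α}

theorem add_mul_period_of_ge {T N : ℕ} (h : ∀ n ≥ N, u (n + T) = u n) (k : ℕ) {n : ℕ}
    (hn : N ≤ n) : u (n + k * T) = u n := by
  induction k with
  | zero => simp
  | succ k ih => rw [Nat.succ_mul, ← add_assoc, h _ (by omega), ih]

theorem add_mul_period {T : ℕ} (h : ∀ᶠ n in atTop, u (n + T) = u n) (k : ℕ) :
    ∀ᶠ n in atTop, u (n + k * T) = u n := by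
  obtain ⟨N, hN⟩ := eventually_atTop.1 h
  exact eventually_atTop.2 ⟨N, fun n hn => add_mul_period_of_ge hN k hn⟩

theorem congr {v : ℕ → α} (hv : EventuallyPeriodic v) (h : u =ᶠ[atTop] v) :
    EventuallyPeriodic u := by
  obtain ⟨T, hT, hv⟩ := hv
  refine ⟨T, hT, ?_⟩
  filter_upwards [hv, h, (tendsto_add_atTop_nat T).eventually h] with n h₁ h₂ h₃
  rw [h₃, h₁, h₂]

theorem const (a : α) : EventuallyPeriodic fun _ : ℕ => a :=
  ⟨1, one_pos, .of_forall fun _ => rfl⟩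

theorem comp (f : α → β) (h : EventuallyPeriodic u) : EventuallyPeriodic (f ∘ u) := by
  obtain ⟨T, hT, hu⟩ := h
  exact ⟨T, hT, hu.mono fun n hn => by simp only [Function.comp_apply, hn]⟩

theorem prodMk {v : ℕ → β} (hu : EventuallyPeriodic u) (hv : EventuallyPeriodic v) :
    EventuallyPeriodic fun n => (u n, v n) := by
  obtain ⟨T, hT, hu⟩ := hu
  obtain ⟨T', hT', hv⟩ := hv
  refine ⟨T' * T, Nat.mul_pos hT' hT, ?_⟩
  filter_upwards [add_mul_period hu T', add_mul_period hv T] with n h₁ h₂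
  rw [h₁, mul_comm, h₂]

theorem pi [Finite ι] {u : ι → ℕ → α} (h : ∀ i, EventuallyPeriodic (u i)) :
    EventuallyPeriodic fun n i => u i n := by
  classical
  choose T hT hu using h
  have := Fintype.ofFinite ι
  refine ⟨∏ i, T i, Finset.prod_pos fun i _ => hT i, ?_⟩
  filter_upwards [eventually_all.2 fun i => add_mul_period (hu i) (∏ j ∈ Finset.univ.erase i, T j)]
    with n hn
  funext i
  rw [← Finset.prod_erase_mul _ _ (Finset.mem_univ i), hn i]

theorem iterate [Finite α] (f : α → α) (x : α) : EventuallyPeriodic fun n => f^[n] x := by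
  obtain ⟨i, j, hij, h⟩ := Finite.exists_ne_map_eq_of_infinite fun n => f^[n] x
  wlog hlt : i < j generalizing i j
  · exact this j i hij.symm h.symm (by omega)
  refine ⟨j - i, by omega, eventually_atTop.2 ⟨i, fun n hn => ?_⟩⟩
  show f^[n + (j - i)] x = f^[n] x
  rw [show n + (j - i) = n - i + j by omega, Function.iterate_add_apply, ← h,
    ← Function.iterate_add_apply, Nat.sub_add_cancel hn]

theorem pow {M : Type*} [Monoid M] [Finite M] (a : M) : EventuallyPeriodic fun n => a ^ n := by
  simpa [mul_left_iterate] using iterate (a * ·) 1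

theorem exists_finset_eq_biUnion {S : Set ℕ} (h : EventuallyPeriodic (· ∈ S)) :
    ∃ s : Finset (ℕ × ℕ), S = ⋃ p ∈ s, {n : ℕ | ∃ k : ℕ, n = p.1 + p.2 * k} := by
  classical
  obtain ⟨T, hT, hS⟩ := h
  obtain ⟨N, hN⟩ := eventually_atTop.1 hS
  have hper (k : ℕ) {n : ℕ} (hn : N ≤ n) : n + k * T ∈ S ↔ n ∈ S :=
    Iff.of_eq (add_mul_period_of_ge hN k hn)
  refine ⟨((Finset.range N).filter (· ∈ S)).image (·, 0) ∪
    ((Finset.Ico N (N + T)).filter (· ∈ S)).image (·, T), Set.ext fun n => ?_⟩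
  simp only [Set.mem_iUnion, exists_prop, Finset.mem_union, Finset.mem_image, Finset.mem_filter,
    Finset.mem_range, Finset.mem_Ico, or_and_right, exists_or, exists_exists_and_eq_and,
    Set.mem_ofPred_eq, zero_mul, add_zero, exists_const]
  constructor
  · intro hn
    by_cases hnN : n < N
    · exact Or.inl ⟨n, ⟨hnN, hn⟩, rfl⟩
    · have hr : n = N + (n - N) % T + T * ((n - N) / T) := by
        have := Nat.mod_add_div (n - N) T
        omega
      refine Or.inr ⟨N + (n - N) % T, ⟨⟨by omega, by have := Nat.mod_lt (n - N) hT; omega⟩, ?_⟩,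
        (n - N) / T, hr⟩
      rw [← hper ((n - N) / T) (by omega), mul_comm, ← hr]
      exact hn
  · rintro (⟨r, ⟨-, hr⟩, rfl⟩ | ⟨r, ⟨⟨hNr, -⟩, hr⟩, k, rfl⟩)
    · exact hr
    · rw [mul_comm]
      exact (hper k hNr).2 hr

end EventuallyPeriodic

theorem eventuallyPeriodic_of_modEq {ι : Type*} [Finite ι] {P : ℕ → Prop} {M : ℕ} (hM : M ≠ 0)
    (b : ι → ℤ) (h : ∀ n n', (∀ i, b i ^ n ≡ b i ^ n' [ZMOD M]) → (P n ↔ P n')) :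
    EventuallyPeriodic P := by
  have : NeZero M := ⟨hM⟩
  obtain ⟨T, hT, hb⟩ := EventuallyPeriodic.pi fun i => EventuallyPeriodic.pow (b i : ZMod M)
  refine ⟨T, hT, hb.mono fun n hn => propext (h _ _ fun i => ?_)⟩
  exact (ZMod.intCast_eq_intCast_iff _ _ _).1 (by push_cast; exact congr_fun hn i)

-- `p ^ (e + min (v_p X) (v_p Y)) ∣ Z`, phrased without valuations so that `X = 0` or `Y = 0`
-- needs no special treatment.
def PowGcdDvd (p e : ℕ) (X Y Z : ℤ) : Prop :=
  ∀ j, (p : ℤ) ^ j ∣ X → (p : ℤ) ^ j ∣ Y → (p : ℤ) ^ (e + j) ∣ Z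

namespace PowGcdDvd

variable {p e : ℕ} {X Y Z : ℤ}

theorem comm : PowGcdDvd p e X Y Z ↔ PowGcdDvd p e Y X Z :=
  ⟨fun h j hX hY => h j hY hX, fun h j hX hY => h j hY hX⟩

theorem and_not_iff_forall_lt {K : ℕ} :
    (PowGcdDvd p e X Y Z ∧ ¬((p : ℤ) ^ K ∣ X ∧ (p : ℤ) ^ K ∣ Y)) ↔
      (∀ j < K, (p : ℤ) ^ j ∣ X → (p : ℤ) ^ j ∣ Y → (p : ℤ) ^ (e + j) ∣ Z) ∧
        ¬((p : ℤ) ^ K ∣ X ∧ (p : ℤ) ^ K ∣ Y) :=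
  ⟨fun ⟨h, hK⟩ => ⟨fun j _ => h j, hK⟩, fun ⟨h, hK⟩ => ⟨fun j hX hY => h j (lt_of_not_ge fun hKj =>
    hK ⟨(pow_dvd_pow _ hKj).trans hX, (pow_dvd_pow _ hKj).trans hY⟩) hX hY, hK⟩⟩

theorem and_not_iff_of_modEq {K : ℕ} {X' Y' Z' : ℤ} (hX : X ≡ X' [ZMOD p ^ (e + K)])
    (hY : Y ≡ Y' [ZMOD p ^ (e + K)]) (hZ : Z ≡ Z' [ZMOD p ^ (e + K)]) :
    (PowGcdDvd p e X Y Z ∧ ¬((p : ℤ) ^ K ∣ X ∧ (p : ℤ) ^ K ∣ Y)) ↔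
      (PowGcdDvd p e X' Y' Z' ∧ ¬((p : ℤ) ^ K ∣ X' ∧ (p : ℤ) ^ K ∣ Y')) := by
  have hmod {i : ℕ} (hi : i ≤ e + K) {W W' : ℤ} (h : W ≡ W' [ZMOD p ^ (e + K)]) :
      (p : ℤ) ^ i ∣ W ↔ (p : ℤ) ^ i ∣ W' :=
    (h.of_dvd (pow_dvd_pow _ hi)).dvd_iff
  rw [and_not_iff_forall_lt, and_not_iff_forall_lt, hmod le_add_self hX, hmod le_add_self hY]
  refine and_congr_left' (forall₂_congr fun j hj => ?_)
  rw [hmod (by omega) hX, hmod (by omega) hY, hmod (by omega) hZ]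

theorem pow_mul_iff (hp : p ≠ 0) (k : ℕ) :
    PowGcdDvd p e ((p : ℤ) ^ k * X) ((p : ℤ) ^ k * Y) ((p : ℤ) ^ k * Z) ↔ PowGcdDvd p e X Y Z := by
  have hpk : (p : ℤ) ^ k ≠ 0 := pow_ne_zero _ (by exact_mod_cast hp)
  constructor
  · intro h j hX hY
    have := h (k + j) (pow_add (p : ℤ) k j ▸ mul_dvd_mul_left _ hX)
      (pow_add (p : ℤ) k j ▸ mul_dvd_mul_left _ hY)
    rwa [show e + (k + j) = k + (e + j) by omega, pow_add, mul_dvd_mul_iff_left hpk] at this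
  · intro h j hX hY
    obtain hjk | hkj := le_or_gt j k
    · have hZ : (p : ℤ) ^ (e + k) ∣ (p : ℤ) ^ k * Z := by
        rw [add_comm, pow_add]
        exact mul_dvd_mul_left _ (by simpa using h 0 (by simp) (by simp))
      exact (pow_dvd_pow _ (by omega)).trans hZ
    · obtain ⟨i, rfl⟩ := Nat.exists_eq_add_of_lt hkj
      rw [show k + i + 1 = k + (i + 1) by omega, pow_add, mul_dvd_mul_iff_left hpk] at hX hY
      rw [show e + (k + i + 1) = k + (e + (i + 1)) by omega, pow_add]
      exact mul_dvd_mul_left _ (h _ hX hY)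

theorem iff_of_not_dvd (hX : ¬(p : ℤ) ∣ X) : PowGcdDvd p e X Y Z ↔ (p : ℤ) ^ e ∣ Z := by
  refine ⟨fun h => by simpa using h 0 (by simp) (by simp), fun h j hjX _ => ?_⟩
  obtain _ | j := j
  · simpa using h
  · exact absurd ((dvd_pow_self _ (Nat.succ_ne_zero j)).trans hjX) hX

theorem iff_of_forall_dvd_iff {c : ℕ} (hc : ∀ j, ((p : ℤ) ^ j ∣ X ∧ (p : ℤ) ^ j ∣ Y) ↔ j ≤ c) :
    PowGcdDvd p e X Y Z ↔ (p : ℤ) ^ (e + c) ∣ Z :=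
  ⟨fun h => h c ((hc c).2 le_rfl).1 ((hc c).2 le_rfl).2,
    fun h j hX hY => (pow_dvd_pow _ (by have := (hc j).1 ⟨hX, hY⟩; omega)).trans h⟩

end PowGcdDvd

theorem natCast_mul_gcd_dvd_iff_forall_powGcdDvd {M : ℕ} {X Y Z : ℤ} (hM : M ≠ 0) (hXY : X ≠ 0)
    (hZ : (Int.gcd X Y : ℤ) ∣ Z) :
    (M : ℤ) * Int.gcd X Y ∣ Z ↔ ∀ p ∈ M.primeFactors, PowGcdDvd p (M.factorization p) X Y Z := by
  constructor
  · intro h p _ j hjX hjY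
    have hj : (p : ℤ) ^ j ∣ Int.gcd X Y := by
      exact_mod_cast Int.dvd_gcd (by exact_mod_cast hjX) (by exact_mod_cast hjY)
    rw [pow_add]
    exact (mul_dvd_mul (by exact_mod_cast Nat.ordProj_dvd M p) hj).trans h
  · intro h
    obtain ⟨W, rfl⟩ := hZ
    refine mul_comm (M : ℤ) _ ▸ mul_dvd_mul_left _ (Int.natCast_dvd.2 ?_)
    refine (Nat.dvd_iff_prime_pow_dvd_dvd _ _).2 fun q k hq hqk => ?_
    obtain rfl | hk := Nat.eq_zero_or_pos k
    · simp
    have hqM : q ∈ M.primeFactors :=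
      Nat.mem_primeFactors.2 ⟨hq, (dvd_pow_self q hk.ne').trans hqk, hM⟩
    set g := Int.gcd X Y
    have hg : g ≠ 0 := Int.gcd_ne_zero_left hXY
    have hgq : ((q ^ g.factorization q : ℕ) : ℤ) ∣ g :=
      Int.natCast_dvd_natCast.2 (Nat.ordProj_dvd g q)
    -- the hypothesis at `j = v_q g`, then cancel `q ^ v_q g` and the part of `g` prime to `q`
    have hpow := h q hqM (g.factorization q) (by exact_mod_cast hgq.trans (Int.gcd_dvd_left X Y))
      (by exact_mod_cast hgq.trans (Int.gcd_dvd_right X Y))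
    have hsplit : (q : ℤ) ^ g.factorization q * ((ordCompl[q] g : ℕ) * W) = g * W := by
      rw [← mul_assoc]; norm_cast; rw [Nat.ordProj_mul_ordCompl_eq_self]
    rw [add_comm, pow_add, ← hsplit,
      mul_dvd_mul_iff_left (pow_ne_zero _ (by exact_mod_cast hq.ne_zero))] at hpow
    have hcop : IsCoprime ((q : ℤ) ^ M.factorization q) (ordCompl[q] g : ℕ) := by
      refine IsCoprime.pow_left ((Nat.prime_iff_prime_int.1 hq).coprime_iff_not_dvd.2 ?_)
      exact_mod_cast Nat.not_dvd_ordCompl hq hg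
    exact Int.natCast_dvd.1 ((pow_dvd_pow _ ((hq.pow_dvd_iff_le_factorization hM).1 hqk)).trans
      (hcop.dvd_of_dvd_mul_left hpow))

theorem Nat.Prime.pow_dvd_pow_pred_mul_choose {p u t k : ℕ} (hp : p.Prime) (ht : p ^ u ∣ t)
    (hk : 1 ≤ k) : p ^ u ∣ p ^ (k - 1) * t.choose k := by
  obtain ⟨a, k', hk', hka⟩ := Nat.exists_eq_pow_mul_and_not_dvd (by omega : k ≠ 0) p hp.ne_one
  have hdvd : p ^ u ∣ k' * (p ^ a * t.choose k) := by
    obtain _ | t := t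
    · simp [Nat.choose_eq_zero_of_lt (by omega : 0 < k)]
    refine ht.trans ⟨t.choose (k - 1), ?_⟩
    have := Nat.add_one_mul_choose_eq t (k - 1)
    rw [Nat.sub_add_cancel hk] at this
    rw [this, hka]; ring
  have hcop : Nat.Coprime (p ^ u) k' := Nat.Coprime.pow_left _ ((hp.coprime_iff_not_dvd).2 hk')
  refine (hcop.dvd_of_dvd_mul_left hdvd).trans (mul_dvd_mul_right (pow_dvd_pow _ ?_) _)
  have h1 : a < p ^ a := Nat.lt_pow_self hp.one_lt
  have h2 : p ^ a ≤ k :=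
    hka ▸ Nat.le_mul_of_pos_right _ (Nat.pos_of_ne_zero (by rintro rfl; simp at hk'))
  omega

theorem Int.pow_dvd_one_add_pow_sub_sub {p l u t : ℕ} (hp : p.Prime) {x : ℤ} (hl : 1 ≤ l)
    (hx : (p : ℤ) ^ l ∣ x) (ht : p ^ u ∣ t) :
    (p : ℤ) ^ (2 * l - 1 + u) ∣ (1 + x) ^ t - 1 - t * x := by
  have hterm (k : ℕ) (hk : 2 ≤ k) : (p : ℤ) ^ (2 * l - 1 + u) ∣ x ^ k * (t.choose k : ℕ) := by
    have hp0 : (p : ℤ) ^ (k - 1) ≠ 0 := pow_ne_zero _ (by exact_mod_cast hp.ne_zero)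
    rw [← mul_dvd_mul_iff_left hp0, ← pow_add, mul_left_comm]
    have hc : (p : ℤ) ^ u ∣ (p : ℤ) ^ (k - 1) * (t.choose k : ℕ) := by
      exact_mod_cast hp.pow_dvd_pow_pred_mul_choose ht (by omega : 1 ≤ k)
    have hxk : (p : ℤ) ^ (l * k) ∣ x ^ k := pow_mul (p : ℤ) l k ▸ pow_dvd_pow_of_dvd hx k
    refine (pow_dvd_pow _ ?_).trans (pow_add (p : ℤ) _ u ▸ mul_dvd_mul hxk hc)
    obtain ⟨i, rfl⟩ := Nat.exists_eq_add_of_le hl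
    obtain ⟨j, rfl⟩ := Nat.exists_eq_add_of_le hk
    rw [show 2 + j - 1 = j + 1 by omega, show 2 * (1 + i) - 1 = 2 * i + 1 by omega]
    nlinarith
  obtain _ | _ | t := t
  · simp
  · simp
  have hsum : (1 + x) ^ (t + 2) - 1 - ((t + 2 : ℕ) : ℤ) * x =
      ∑ i ∈ Finset.range (t + 1), x ^ (i + 2) * ((t + 2).choose (i + 2) : ℕ) := by
    rw [add_comm 1 x, add_pow, Finset.sum_range_succ', Finset.sum_range_succ']
    simp only [Nat.reduceSubDiff, one_pow, mul_one, zero_add, pow_one, Nat.add_one_sub_one,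
      Nat.choose_one_right, Nat.cast_add, Nat.cast_ofNat, pow_zero, tsub_zero,
      Nat.choose_zero_right, Nat.cast_one, add_sub_cancel_right]
    ring
  rw [hsum]
  exact Finset.dvd_sum fun i _ => hterm _ (by omega)

theorem Int.exists_pos_forall_dvd_pow_sub_one_iff {M : ℕ} (hM : M ≠ 0) {a b : ℤ}
    (ha : IsCoprime a M) (hb : IsCoprime b M) :
    ∃ ρ, 0 < ρ ∧ ∀ s, ((M : ℤ) ∣ a ^ s - 1 ∧ (M : ℤ) ∣ b ^ s - 1) ↔ ρ ∣ s := by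
  have : NeZero M := ⟨hM⟩
  have hunit {c : ℤ} (hc : IsCoprime c M) : IsUnit (c : ZMod M) := by
    obtain ⟨u, v, huv⟩ := hc
    refine IsUnit.of_mul_eq_one (u : ZMod M) ?_
    have := congrArg (Int.cast : ℤ → ZMod M) huv
    push_cast at this
    rwa [ZMod.natCast_self, mul_zero, add_zero, mul_comm] at this
  let g : ZMod M × ZMod M := (a, b)
  refine ⟨orderOf g, (Prod.isUnit_iff.2 ⟨hunit ha, hunit hb⟩).isOfFinOrder.orderOf_pos,
    fun s => ?_⟩
  rw [orderOf_dvd_iff_pow_eq_one, Prod.ext_iff]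
  simp only [g, Prod.pow_mk, Prod.fst_one, Prod.snd_one, ← ZMod.intCast_zmod_eq_zero_iff_dvd]
  push_cast
  simp only [sub_eq_zero]

theorem Int.eventually_lt_pow {d : ℤ} (hd : 1 < d) (c : ℤ) : ∀ᶠ n in atTop, c < d ^ n :=
  (tendsto_pow_atTop_atTop_of_one_lt hd).eventually_gt_atTop c

section

variable {p : ℕ}

theorem Nat.Prime.finiteMultiplicity_intCast (hp : p.Prime) {z : ℤ} (hz : z ≠ 0) :
    FiniteMultiplicity (p : ℤ) z :=
  Int.finiteMultiplicity_iff.2 ⟨by simp [hp.ne_one], hz⟩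

theorem Int.emultiplicity_pow_eq_zero (hp : p.Prime) {d : ℤ} (hd : ¬(p : ℤ) ∣ d) (n : ℕ) :
    emultiplicity (p : ℤ) (d ^ n) = 0 :=
  emultiplicity_eq_zero.2 fun h => hd ((Nat.prime_iff_prime_int.1 hp).dvd_of_dvd_pow h)

theorem Int.pow_add_dvd_mul_iff (hp : p.Prime) {a z : ℤ} {u k : ℕ}
    (ha : emultiplicity (p : ℤ) a = u) : (p : ℤ) ^ (u + k) ∣ a * z ↔ (p : ℤ) ^ k ∣ z := by
  have hp' : Prime (p : ℤ) := Nat.prime_iff_prime_int.1 hp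
  rw [pow_dvd_iff_le_emultiplicity, pow_dvd_iff_le_emultiplicity, emultiplicity_mul hp', ha,
    Nat.cast_add, ENat.add_le_add_iff_left (ENat.natCast_ne_top u)]

-- `d ^ n - c` differs from the much more divisible `d ^ (n + ρ t) - c` by `dⁿ ((1 + x) ^ t - 1)`,
-- whose valuation is that of `t x` by the binomial estimate.
theorem emultiplicity_pow_sub_eq_and_dvd (hp : p.Prime) {d c : ℤ} (hd : ¬(p : ℤ) ∣ d)
    {ρ t e l u H n : ℕ} (hl : e + 2 ≤ l) (hx : emultiplicity (p : ℤ) (d ^ ρ - 1) = l)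
    (ht : emultiplicity (p : ℤ) (t : ℤ) = u) (hH : ¬(p : ℤ) ^ H ∣ d ^ n - c)
    (hH' : (p : ℤ) ^ (H + e) ∣ d ^ (n + ρ * t) - c) :
    emultiplicity (p : ℤ) (d ^ n - c) = ↑(l + u) ∧
      (p : ℤ) ^ (l + u + e) ∣ d ^ n - c + t * d ^ n * (d ^ ρ - 1) := by
  have hp' : Prime (p : ℤ) := Nat.prime_iff_prime_int.1 hp
  set x := d ^ ρ - 1
  set R := (1 + x) ^ t - 1 - t * x
  have hR : (p : ℤ) ^ (2 * l - 1 + u) ∣ R :=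
    Int.pow_dvd_one_add_pow_sub_sub hp (by omega) (pow_dvd_of_le_emultiplicity hx.ge)
      (Int.natCast_dvd_natCast.1 (pow_dvd_of_le_emultiplicity ht.ge))
  have hΔ : d ^ (n + ρ * t) - c - (d ^ n - c) = d ^ n * R + d ^ n * (t * x) := by
    simp only [R, x, pow_add, pow_mul]; ring
  have hmain : emultiplicity (p : ℤ) (d ^ n * (t * x)) = ↑(l + u) := by
    rw [emultiplicity_mul hp', emultiplicity_mul hp', Int.emultiplicity_pow_eq_zero hp hd, ht, hx]
    push_cast; ring
  have hΔv : emultiplicity (p : ℤ) (d ^ (n + ρ * t) - c - (d ^ n - c)) = ↑(l + u) := by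
    rw [hΔ, emultiplicity_add_of_gt] <;> rw [hmain]
    exact (Nat.cast_lt.2 (by omega : l + u < 2 * l - 1 + u)).trans_le
      (le_emultiplicity_of_pow_dvd (hR.mul_left _))
  have hlt : l + u < H := by
    by_contra! hle
    refine hH ?_
    have h1 : (p : ℤ) ^ H ∣ d ^ (n + ρ * t) - c - (d ^ n - c) :=
      pow_dvd_of_le_emultiplicity (by rw [hΔv]; exact_mod_cast hle)
    have := dvd_sub ((pow_dvd_pow _ (by omega)).trans hH') h1
    rwa [sub_sub_cancel] at this
  refine ⟨?_, ?_⟩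
  · have := emultiplicity_sub_of_gt (hΔv ▸ (Nat.cast_lt.2 (by omega : l + u < H + e)).trans_le
      (le_emultiplicity_of_pow_dvd hH'))
    rwa [sub_sub_cancel, hΔv] at this
  · have : d ^ n - c + t * d ^ n * x = (d ^ (n + ρ * t) - c) - d ^ n * R := by
      linear_combination -hΔ
    rw [this]
    exact dvd_sub ((pow_dvd_pow _ (by omega)).trans hH')
      (((pow_dvd_pow _ (by omega)).trans hR).mul_left _)

theorem powGcdDvd_iff_of_dvd_add_mul (hp : p.Prime) {e l₁ l₂ u : ℕ} {A B C a₁ a₂ c t x y : ℤ}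
    (h₁ : emultiplicity (p : ℤ) (a₁ - c) = ↑(l₁ + u))
    (h₂ : emultiplicity (p : ℤ) (a₂ - c) = ↑(l₂ + u))
    (hx : (p : ℤ) ^ (l₁ + u + e) ∣ a₁ - c + t * a₁ * x)
    (hy : (p : ℤ) ^ (l₂ + u + e) ∣ a₂ - c + t * a₂ * y)
    (ht : emultiplicity (p : ℤ) (t * a₁) = u) (hly : (p : ℤ) ^ l₂ ∣ y)
    (hl₂ : e ≤ l₂) :
    PowGcdDvd p e (a₁ - c) (a₂ - c) (A * (a₂ - c) + B * (a₁ - c) + C * ((a₁ - c) * (a₂ - c))) ↔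
      (p : ℤ) ^ (e + min l₁ l₂) ∣ A * y + B * x := by
  have hX : (p : ℤ) ^ (l₁ + u) ∣ a₁ - c := pow_dvd_of_le_emultiplicity h₁.ge
  have hY : (p : ℤ) ^ (l₂ + u) ∣ a₂ - c := pow_dvd_of_le_emultiplicity h₂.ge
  have hmin : ∀ j, ((p : ℤ) ^ j ∣ a₁ - c ∧ (p : ℤ) ^ j ∣ a₂ - c) ↔ j ≤ min l₁ l₂ + u := by
    intro j
    rw [pow_dvd_iff_le_emultiplicity, pow_dvd_iff_le_emultiplicity, h₁, h₂, Nat.cast_le,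
      Nat.cast_le]
    omega
  rw [PowGcdDvd.iff_of_forall_dvd_iff hmin, ← Int.pow_add_dvd_mul_iff hp ht (z := A * y + B * x),
    show u + (e + min l₁ l₂) = e + (min l₁ l₂ + u) by omega]
  -- modulo `p ^ (e + (min l₁ l₂ + u))` the combination is `-t a₁ (A y + B x)`
  refine (dvd_iff_dvd_of_dvd_sub ?_).trans dvd_neg
  have hP {k : ℕ} (hk : e + (min l₁ l₂ + u) ≤ k) {z : ℤ} (hz : (p : ℤ) ^ k ∣ z) :
      (p : ℤ) ^ (e + (min l₁ l₂ + u)) ∣ z :=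
    (pow_dvd_pow _ hk).trans hz
  have hYX : (p : ℤ) ^ (min l₁ l₂ + u) ∣ (a₂ - c) - (a₁ - c) :=
    dvd_sub ((pow_dvd_pow _ (by omega)).trans hY) ((pow_dvd_pow _ (by omega)).trans hX)
  have hXY : (p : ℤ) ^ (l₁ + u + (l₂ + u)) ∣ (a₁ - c) * (a₂ - c) :=
    pow_add (p : ℤ) _ _ ▸ mul_dvd_mul hX hY
  have hyYX : (p : ℤ) ^ (l₂ + (min l₁ l₂ + u)) ∣ y * ((a₂ - c) - (a₁ - c)) :=
    pow_add (p : ℤ) _ _ ▸ mul_dvd_mul hly hYX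
  rw [show A * (a₂ - c) + B * (a₁ - c) + C * ((a₁ - c) * (a₂ - c)) - -(t * a₁ * (A * y + B * x)) =
      A * (a₂ - c + t * a₂ * y) + B * (a₁ - c + t * a₁ * x) + C * ((a₁ - c) * (a₂ - c))
        - t * A * (y * ((a₂ - c) - (a₁ - c))) by ring]
  refine dvd_sub (dvd_add (dvd_add ((hP ?_ hy).mul_left _) ((hP ?_ hx).mul_left _))
    ((hP ?_ hXY).mul_left _)) ((hP ?_ hyYX).mul_left _) <;> omega

theorem eventuallyPeriodic_pow_dvd_and_pow_dvd (hp : p ≠ 0) (K : ℕ) (c d₁ d₂ : ℤ) :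
    EventuallyPeriodic fun n => (p : ℤ) ^ K ∣ d₁ ^ n - c ∧ (p : ℤ) ^ K ∣ d₂ ^ n - c := by
  refine eventuallyPeriodic_of_modEq (pow_ne_zero K hp) ![d₁, d₂] fun n n' h => ?_
  have h₁ : d₁ ^ n ≡ d₁ ^ n' [ZMOD (p : ℤ) ^ K] := by exact_mod_cast h 0
  have h₂ : d₂ ^ n ≡ d₂ ^ n' [ZMOD (p : ℤ) ^ K] := by exact_mod_cast h 1
  exact and_congr (h₁.sub_right c).dvd_iff (h₂.sub_right c).dvd_iff

def LocalCond (p e : ℕ) (A B C c d₁ d₂ : ℤ) (n : ℕ) : Prop :=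
  PowGcdDvd p e (d₁ ^ n - c) (d₂ ^ n - c)
    (A * (d₂ ^ n - c) + B * (d₁ ^ n - c) + C * ((d₁ ^ n - c) * (d₂ ^ n - c)))

namespace LocalCond

variable {e : ℕ} {A B C c d₁ d₂ : ℤ}

theorem comm {n : ℕ} : LocalCond p e A B C c d₁ d₂ n ↔ LocalCond p e B A C c d₂ d₁ n := by
  rw [LocalCond, LocalCond, PowGcdDvd.comm, add_comm (A * _), mul_comm (d₁ ^ n - c)]

theorem eventuallyPeriodic_and_not_dvd (hp : p ≠ 0) (K : ℕ) :
    EventuallyPeriodic fun n => LocalCond p e A B C c d₁ d₂ n ∧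
      ¬((p : ℤ) ^ K ∣ d₁ ^ n - c ∧ (p : ℤ) ^ K ∣ d₂ ^ n - c) := by
  refine eventuallyPeriodic_of_modEq (pow_ne_zero (e + K) hp) ![d₁, d₂] fun n n' h => ?_
  have h₁ : d₁ ^ n ≡ d₁ ^ n' [ZMOD (p : ℤ) ^ (e + K)] := by exact_mod_cast h 0
  have h₂ : d₂ ^ n ≡ d₂ ^ n' [ZMOD (p : ℤ) ^ (e + K)] := by exact_mod_cast h 1
  exact PowGcdDvd.and_not_iff_of_modEq (h₁.sub_right c) (h₂.sub_right c) (by gcongr)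

theorem eventuallyPeriodic_of_and_dvd (hp : p ≠ 0) {K : ℕ}
    (h : EventuallyPeriodic fun n => LocalCond p e A B C c d₁ d₂ n ∧
      ((p : ℤ) ^ K ∣ d₁ ^ n - c ∧ (p : ℤ) ^ K ∣ d₂ ^ n - c)) :
    EventuallyPeriodic (LocalCond p e A B C c d₁ d₂) :=
  (((eventuallyPeriodic_and_not_dvd hp K).prodMk h).comp fun q => q.1 ∨ q.2).congr
    (.of_forall fun n => propext (by simp only [Function.comp_apply]; tauto))

theorem eventuallyPeriodic_of_eq_pow_mul (hp : p.Prime) {a : ℕ} {d₁' d₂' : ℤ}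
    (h₁ : d₁ = (p : ℤ) ^ a * d₁') (hd₁' : ¬(p : ℤ) ∣ d₁') (h₂ : d₂ = (p : ℤ) ^ a * d₂') :
    EventuallyPeriodic (LocalCond p e A B C 0 d₁ d₂) := by
  have key (n : ℕ) : LocalCond p e A B C 0 d₁ d₂ n ↔
      (p : ℤ) ^ e ∣ A * d₂' ^ n + B * d₁' ^ n + C * (d₁ ^ n * d₂' ^ n) := by
    have hX : d₁ ^ n - 0 = (p : ℤ) ^ (a * n) * d₁' ^ n := by rw [h₁, sub_zero, mul_pow, pow_mul]
    have hY : d₂ ^ n - 0 = (p : ℤ) ^ (a * n) * d₂' ^ n := by rw [h₂, sub_zero, mul_pow, pow_mul]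
    have hZ : A * (d₂ ^ n - 0) + B * (d₁ ^ n - 0) + C * ((d₁ ^ n - 0) * (d₂ ^ n - 0)) =
        (p : ℤ) ^ (a * n) * (A * d₂' ^ n + B * d₁' ^ n + C * (d₁ ^ n * d₂' ^ n)) := by
      rw [hX, hY, show d₁ ^ n = (p : ℤ) ^ (a * n) * d₁' ^ n by simpa using hX]; ring
    rw [LocalCond, hZ, hX, hY, PowGcdDvd.pow_mul_iff hp.ne_zero,
      PowGcdDvd.iff_of_not_dvd (fun h => hd₁' (Nat.prime_iff_prime_int.1 hp |>.dvd_of_dvd_pow h))]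
  refine eventuallyPeriodic_of_modEq (pow_ne_zero e hp.ne_zero) ![d₁', d₂', d₁] fun n n' h => ?_
  have h₁ : d₁' ^ n ≡ d₁' ^ n' [ZMOD (p : ℤ) ^ e] := by exact_mod_cast h 0
  have h₂ : d₂' ^ n ≡ d₂' ^ n' [ZMOD (p : ℤ) ^ e] := by exact_mod_cast h 1
  have h₃ : d₁ ^ n ≡ d₁ ^ n' [ZMOD (p : ℤ) ^ e] := by exact_mod_cast h 2
  rw [key, key]
  exact Int.ModEq.dvd_iff (by gcongr)

theorem eventuallyPeriodic_of_const_eq_zero (hp : p.Prime) (hd₁ : d₁ ≠ 0) (hd₂ : d₂ ≠ 0) :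
    EventuallyPeriodic (LocalCond p e A B C 0 d₁ d₂) := by
  wlog hle : multiplicity (p : ℤ) d₁ ≤ multiplicity (p : ℤ) d₂ generalizing A B d₁ d₂
  · exact (this hd₂ hd₁ (by omega)).congr (.of_forall fun n => propext comm)
  obtain ⟨d₁', h₁, hd₁'⟩ := (hp.finiteMultiplicity_intCast hd₁).exists_eq_pow_mul_and_not_dvd
  obtain ⟨d₂', h₂⟩ := (pow_dvd_pow _ hle).trans (pow_multiplicity_dvd (p : ℤ) d₂)
  exact eventuallyPeriodic_of_eq_pow_mul hp h₁ hd₁' h₂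

theorem iff_of_frequently_pow_dvd (hp : p.Prime) (hpd₁ : ¬(p : ℤ) ∣ d₁) (hpd₂ : ¬(p : ℤ) ∣ d₂)
    {ρ l₁ l₂ : ℕ}
    (hρ : ∀ s, ((p : ℤ) ^ (e + 2) ∣ d₁ ^ s - 1 ∧ (p : ℤ) ^ (e + 2) ∣ d₂ ^ s - 1) ↔ ρ ∣ s)
    (hl₁ : emultiplicity (p : ℤ) (d₁ ^ ρ - 1) = l₁) (hl₂ : emultiplicity (p : ℤ) (d₂ ^ ρ - 1) = l₂)
    (hle₁ : e + 2 ≤ l₁) (hle₂ : e + 2 ≤ l₂)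
    (hfreq : ∀ K, ∃ᶠ n in atTop, (p : ℤ) ^ K ∣ d₁ ^ n - c ∧ (p : ℤ) ^ K ∣ d₂ ^ n - c) {n : ℕ}
    (hX : d₁ ^ n - c ≠ 0) (hY : d₂ ^ n - c ≠ 0)
    (hdeep : (p : ℤ) ^ (e + 2) ∣ d₁ ^ n - c ∧ (p : ℤ) ^ (e + 2) ∣ d₂ ^ n - c) :
    LocalCond p e A B C c d₁ d₂ n ↔
      (p : ℤ) ^ (e + min l₁ l₂) ∣ A * (d₂ ^ ρ - 1) + B * (d₁ ^ ρ - 1) := by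
  have hp' : Prime (p : ℤ) := Nat.prime_iff_prime_int.1 hp
  obtain ⟨H₁, hH₁⟩ := hp.finiteMultiplicity_intCast hX
  obtain ⟨H₂, hH₂⟩ := hp.finiteMultiplicity_intCast hY
  -- a later point `n + s` at which `D₁, D₂` are much more divisible by `p` than at `n`
  obtain ⟨n', hn', hdeep'⟩ := (hfreq (H₁ + H₂ + 1 + e + (e + 2))).forall_exists_of_atTop (n + 1)
  obtain ⟨s, rfl⟩ : ∃ s, n' = n + s := ⟨n' - n, by omega⟩
  have hstep {d : ℤ} (hd : ¬(p : ℤ) ∣ d) (h : (p : ℤ) ^ (e + 2) ∣ d ^ n - c)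
      (h' : (p : ℤ) ^ (H₁ + H₂ + 1 + e + (e + 2)) ∣ d ^ (n + s) - c) :
      (p : ℤ) ^ (e + 2) ∣ d ^ s - 1 := by
    have hdiff : (p : ℤ) ^ (e + 2) ∣ d ^ n * (d ^ s - 1) := by
      have := dvd_sub ((pow_dvd_pow _ (by omega)).trans h') h
      rwa [show d ^ (n + s) - c - (d ^ n - c) = d ^ n * (d ^ s - 1) by ring] at this
    exact ((hp'.coprime_iff_not_dvd.2 hd).pow (m := e + 2) (n := n)).dvd_of_dvd_mul_left hdiff
  obtain ⟨t, ht⟩ := (hρ s).1 ⟨hstep hpd₁ hdeep.1 hdeep'.1, hstep hpd₂ hdeep.2 hdeep'.2⟩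
  have ht0 : (t : ℤ) ≠ 0 := by
    norm_cast; rintro rfl; rw [mul_zero] at ht; omega
  obtain ⟨u, hu⟩ : ∃ u : ℕ, emultiplicity (p : ℤ) (t : ℤ) = u :=
    ⟨_, (hp.finiteMultiplicity_intCast ht0).emultiplicity_eq_multiplicity⟩
  rw [ht] at hdeep'
  obtain ⟨hv₁, hx₁⟩ := emultiplicity_pow_sub_eq_and_dvd hp hpd₁ hle₁ hl₁ hu (H := H₁ + H₂ + 1)
    (fun h => hH₁ ((pow_dvd_pow _ (by omega)).trans h)) ((pow_dvd_pow _ (by omega)).trans hdeep'.1)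
  obtain ⟨hv₂, hx₂⟩ := emultiplicity_pow_sub_eq_and_dvd hp hpd₂ hle₂ hl₂ hu (H := H₁ + H₂ + 1)
    (fun h => hH₂ ((pow_dvd_pow _ (by omega)).trans h)) ((pow_dvd_pow _ (by omega)).trans hdeep'.2)
  have htd : emultiplicity (p : ℤ) (t * d₁ ^ n) = u := by
    rw [emultiplicity_mul hp', hu, Int.emultiplicity_pow_eq_zero hp hpd₁, add_zero]
  exact powGcdDvd_iff_of_dvd_add_mul hp hv₁ hv₂ hx₁ hx₂ htd
    (pow_dvd_of_le_emultiplicity hl₂.ge) (by omega)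

theorem eventuallyPeriodic_of_frequently_dvd (hp : p.Prime) (hd₁ : 1 < d₁) (hd₂ : 1 < d₂)
    (hpd₁ : ¬(p : ℤ) ∣ d₁) (hpd₂ : ¬(p : ℤ) ∣ d₂)
    (hfreq : ∀ K, ∃ᶠ n in atTop, (p : ℤ) ^ K ∣ d₁ ^ n - c ∧ (p : ℤ) ^ K ∣ d₂ ^ n - c) :
    EventuallyPeriodic (LocalCond p e A B C c d₁ d₂) := by
  have hp' : Prime (p : ℤ) := Nat.prime_iff_prime_int.1 hp
  have hcop {d : ℤ} (hd : ¬(p : ℤ) ∣ d) : IsCoprime d ((p ^ (e + 2) : ℕ) : ℤ) := by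
    push_cast
    exact ((hp'.coprime_iff_not_dvd.2 hd).pow_left).symm
  obtain ⟨ρ, hρ, hρs⟩ := Int.exists_pos_forall_dvd_pow_sub_one_iff
    (pow_ne_zero _ hp.ne_zero) (hcop hpd₁) (hcop hpd₂)
  push_cast at hρs
  have hval {d : ℤ} (hd : 1 < d) (hdρ : (p : ℤ) ^ (e + 2) ∣ d ^ ρ - 1) :
      ∃ l : ℕ, emultiplicity (p : ℤ) (d ^ ρ - 1) = l ∧ e + 2 ≤ l := by
    have hfin : FiniteMultiplicity (p : ℤ) (d ^ ρ - 1) :=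
      hp.finiteMultiplicity_intCast (sub_ne_zero.2 (one_lt_pow₀ hd hρ.ne').ne')
    exact ⟨_, hfin.emultiplicity_eq_multiplicity, hfin.le_multiplicity_of_pow_dvd hdρ⟩
  obtain ⟨l₁, hl₁, hle₁⟩ := hval hd₁ ((hρs ρ).2 dvd_rfl).1
  obtain ⟨l₂, hl₂, hle₂⟩ := hval hd₂ ((hρs ρ).2 dvd_rfl).2
  refine eventuallyPeriodic_of_and_dvd hp.ne_zero (K := e + 2)
    (((eventuallyPeriodic_pow_dvd_and_pow_dvd hp.ne_zero (e + 2) c d₁ d₂).comp fun q =>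
      (p : ℤ) ^ (e + min l₁ l₂) ∣ A * (d₂ ^ ρ - 1) + B * (d₁ ^ ρ - 1) ∧ q).congr ?_)
  filter_upwards [Int.eventually_lt_pow hd₁ c, Int.eventually_lt_pow hd₂ c] with n hX hY
  exact propext (and_congr_left fun hdeep => iff_of_frequently_pow_dvd hp hpd₁ hpd₂ hρs hl₁ hl₂ hle₁
    hle₂ hfreq (sub_ne_zero.2 hX.ne') (sub_ne_zero.2 hY.ne') hdeep)

theorem eventuallyPeriodic (hp : p.Prime) (hd₁ : 1 < d₁) (hd₂ : 1 < d₂) :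
    EventuallyPeriodic (LocalCond p e A B C c d₁ d₂) := by
  obtain rfl | hc := eq_or_ne c 0
  · exact eventuallyPeriodic_of_const_eq_zero hp (by omega) (by omega)
  by_cases hbdd : ∃ K, ∀ᶠ n in atTop, ¬((p : ℤ) ^ K ∣ d₁ ^ n - c ∧ (p : ℤ) ^ K ∣ d₂ ^ n - c)
  · obtain ⟨K, hK⟩ := hbdd
    exact eventuallyPeriodic_of_and_dvd hp.ne_zero ((EventuallyPeriodic.const False).congr
      (hK.mono fun n hn => propext (iff_false_intro fun h => hn h.2)))
  push Not at hbdd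
  have hnd {d : ℤ} (hfreq : ∀ K, ∃ᶠ n in atTop, (p : ℤ) ^ K ∣ d ^ n - c) : ¬(p : ℤ) ∣ d := by
    intro hpd
    obtain ⟨K, hK⟩ := hp.finiteMultiplicity_intCast hc
    obtain ⟨n, hn, hdvd⟩ := (hfreq (K + 1)).forall_exists_of_atTop (K + 1)
    have hdn : (p : ℤ) ^ (K + 1) ∣ d ^ n := (pow_dvd_pow _ hn).trans (pow_dvd_pow_of_dvd hpd n)
    exact hK (by simpa using dvd_sub hdn hdvd)
  exact eventuallyPeriodic_of_frequently_dvd hp hd₁ hd₂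
    (hnd fun K => (hbdd K).mono fun _ h => h.1) (hnd fun K => (hbdd K).mono fun _ h => h.2) hbdd

end LocalCond

end

theorem IsPrimitiveRoot.exists_zpow_eq_iff {K : Type*} [Field K] [IsAlgClosed K] {ξ : K} {m : ℕ}
    (hξ : IsPrimitiveRoot ξ m) (hm : 0 < m) {D₁ D₂ : ℤ} (hD : D₁ ≠ 0) (α β : ℤ) :
    (∃ x : K, x ≠ 0 ∧ x ^ D₁ = ξ ^ α ∧ x ^ D₂ = ξ ^ β) ↔
      (m : ℤ) * Int.gcd D₁ D₂ ∣ α * D₂ - β * D₁ := by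
  have hξ0 : ξ ≠ 0 := hξ.ne_zero hm.ne'
  obtain ⟨g, D₁', D₂', hg, hcop, rfl, rfl⟩ :=
    Int.exists_gcd_one' (Int.gcd_pos_of_ne_zero_left D₂ hD)
  have hgcd : Int.gcd (D₁' * g) (D₂' * g) = g := by
    rw [Int.gcd_mul_right, hcop, one_mul, Int.natAbs_natCast]
  rw [hgcd, show α * (D₂' * g) - β * (D₁' * g) = (α * D₂' - β * D₁') * g by ring,
    mul_dvd_mul_iff_right (by exact_mod_cast hg.ne'), ← hξ.zpow_eq_one_iff_dvd,
    zpow_sub₀ hξ0, div_eq_one_iff_eq (zpow_ne_zero _ hξ0)]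
  constructor
  · rintro ⟨x, -, h₁, h₂⟩
    rw [zpow_mul, zpow_mul, ← h₁, ← h₂, ← zpow_mul, ← zpow_mul]
    ring_nf
  · intro h
    obtain ⟨u, v, huv⟩ := Int.isCoprime_iff_gcd_eq_one.2 hcop
    obtain ⟨x, hx⟩ := IsAlgClosed.exists_pow_nat_eq (ξ ^ (u * α + v * β)) hg
    have hx0 : x ≠ 0 := by
      rintro rfl
      exact zpow_ne_zero _ hξ0 (by rw [← hx, zero_pow hg.ne'])
    have hroot (D γ : ℤ) (hγ : ξ ^ ((u * α + v * β) * D) = ξ ^ γ) : x ^ (D * g) = ξ ^ γ := by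
      rw [mul_comm, zpow_mul, zpow_natCast, hx, ← zpow_mul, hγ]
    refine ⟨x, hx0, hroot _ _ ?_, hroot _ _ ?_⟩
    · rw [show (u * α + v * β) * D₁' = α * (u * D₁' + v * D₂') + β * D₁' * v - α * D₂' * v by
          ring,
        huv, mul_one, zpow_sub₀ hξ0, zpow_add₀ hξ0, zpow_mul ξ (β * D₁'), zpow_mul ξ (α * D₂'), h,
        mul_div_cancel_right₀ _ (zpow_ne_zero _ (zpow_ne_zero _ hξ0))]
    · rw [show (u * α + v * β) * D₂' = β * (u * D₁' + v * D₂') + α * D₂' * u - β * D₁' * u by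
          ring,
        huv, mul_one, zpow_sub₀ hξ0, zpow_add₀ hξ0, zpow_mul ξ (β * D₁'), zpow_mul ξ (α * D₂'), h,
        mul_div_cancel_right₀ _ (zpow_ne_zero _ (zpow_ne_zero _ hξ0))]

theorem iterate_eq_zpow_mul {K : Type*} [Field K] {ξ : K} (hξ : ξ ≠ 0) {a : ℕ} {d : ℤ}
    {φ : K → K} (hφ : ∀ y, φ y = ξ ^ a * y ^ d) (x : K) (n : ℕ) :
    φ^[n] x = ξ ^ ((a : ℤ) * ∑ i ∈ Finset.range n, d ^ i) * x ^ (d ^ n) := by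
  induction n with
  | zero => simp
  | succ n ih =>
    rw [Function.iterate_succ_apply', ih, hφ, mul_zpow, ← zpow_mul, ← zpow_mul, ← zpow_natCast,
      ← mul_assoc, ← zpow_add₀ hξ, Finset.sum_range_succ', pow_succ]
    congr 2
    simp only [Finset.mul_sum, Finset.sum_mul, mul_add, pow_succ, pow_zero, mul_one, mul_assoc]
    exact add_comm _ _

theorem iterate_eq_mul_pow_iff {K : Type*} [Field K] {ξ : K} (hξ : ξ ≠ 0) {a : ℕ} {d : ℤ}
    {φ : K → K} (hφ : ∀ y, φ y = ξ ^ a * y ^ d) {x : K} (hx : x ≠ 0) (n c k : ℕ) :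
    φ^[n] x = ξ ^ c * x ^ k ↔
      x ^ (d ^ n - k) = ξ ^ ((c : ℤ) - a * ∑ i ∈ Finset.range n, d ^ i) := by
  rw [iterate_eq_zpow_mul hξ hφ, zpow_sub₀ hx, zpow_sub₀ hξ,
    div_eq_div_iff (zpow_ne_zero _ hx) (zpow_ne_zero _ hξ), zpow_natCast, zpow_natCast]
  constructor <;> intro h <;> linear_combination h

theorem eventuallyPeriodic_natCast_mul_gcd_dvd {m : ℕ} (hm : 0 < m) (a b c₁ c₂ d₃ : ℤ)
    {d₁ d₂ : ℤ} (hd₁ : 1 < d₁) (hd₂ : 1 < d₂) :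
    EventuallyPeriodic fun n => (m : ℤ) * Int.gcd (d₁ ^ n - d₃) (d₂ ^ n - d₃) ∣
      (c₁ - a * ∑ i ∈ Finset.range n, d₁ ^ i) * (d₂ ^ n - d₃) -
        (c₂ - b * ∑ i ∈ Finset.range n, d₂ ^ i) * (d₁ ^ n - d₃) := by
  set w := (d₁ - 1) * (d₂ - 1)
  have hw : 0 < w := mul_pos (by omega) (by omega)
  set M := m * w.toNat
  have hM : (M : ℤ) = m * w := by push_cast [M, Int.toNat_of_nonneg hw.le]; rfl
  set A := (d₂ - 1) * ((d₁ - 1) * c₁ + a - a * d₃)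
  set B := -((d₁ - 1) * ((d₂ - 1) * c₂ + b - b * d₃))
  set C := b * (d₁ - 1) - a * (d₂ - 1)
  refine ((EventuallyPeriodic.pi fun p : M.primeFactors =>
      LocalCond.eventuallyPeriodic (e := M.factorization p) (A := A) (B := B) (C := C) (c := d₃)
        (Nat.prime_of_mem_primeFactors p.2) hd₁ hd₂).comp fun f => ∀ p, f p).congr ?_
  filter_upwards [Int.eventually_lt_pow hd₁ d₃] with n hX
  set X := d₁ ^ n - d₃
  set Y := d₂ ^ n - d₃
  have hF : w * ((c₁ - a * ∑ i ∈ Finset.range n, d₁ ^ i) * Y -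
      (c₂ - b * ∑ i ∈ Finset.range n, d₂ ^ i) * X) = A * Y + B * X + C * (X * Y) := by
    linear_combination -a * (d₂ - 1) * Y * geom_sum_mul d₁ n + b * (d₁ - 1) * X * geom_sum_mul d₂ n
  have hgF : (Int.gcd X Y : ℤ) ∣ A * Y + B * X + C * (X * Y) :=
    dvd_add (dvd_add ((Int.gcd_dvd_right X Y).mul_left _) ((Int.gcd_dvd_left X Y).mul_left _))
      (((Int.gcd_dvd_left X Y).mul_right _).mul_left _)
  simp only [Function.comp_apply, Subtype.forall]
  rw [← mul_dvd_mul_iff_left hw.ne', hF, ← mul_assoc, mul_comm w, ← hM,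
    natCast_mul_gcd_dvd_iff_forall_powGcdDvd (Nat.mul_ne_zero hm.ne' (by omega))
      (sub_ne_zero.2 hX.ne') hgF]
  rfl

/-- Corollary 4.4: the set of `n` for which a system of twisted power-map
equations admits a nonzero solution is a finite union of arithmetic progressions. -/
theorem stmt13 (a b c₁ c₂ d₃ : ℕ) (m : ℕ) (hm : 0 < m) (ξ : ℂ)
    (hξ : IsPrimitiveRoot ξ m) (d₁ d₂ : ℤ) (hd₁ : 1 < d₁) (hd₂ : 1 < d₂)
    (φ ψ : ℂ → ℂ)
    (hφ : ∀ y, φ y = ξ ^ a * y ^ d₁) (hψ : ∀ y, ψ y = ξ ^ b * y ^ d₂) :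
    ∃ s : Finset (ℕ × ℕ),
      {n : ℕ | 1 ≤ n ∧ ∃ x : ℂ, x ≠ 0 ∧
        φ^[n] x = ξ ^ c₁ * x ^ d₃ ∧ ψ^[n] x = ξ ^ c₂ * x ^ d₃} =
      ⋃ p ∈ s, {n : ℕ | ∃ k : ℕ, n = p.1 + p.2 * k} := by
  have hξ0 : ξ ≠ 0 := hξ.ne_zero hm.ne'
  refine EventuallyPeriodic.exists_finset_eq_biUnion
    ((eventuallyPeriodic_natCast_mul_gcd_dvd hm a b c₁ c₂ d₃ hd₁ hd₂).congr ?_)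
  filter_upwards [eventually_ge_atTop 1, Int.eventually_lt_pow hd₁ d₃] with n hn hX
  rw [← hξ.exists_zpow_eq_iff hm (sub_ne_zero.2 hX.ne')]
  exact propext <| (and_iff_right hn).trans <| exists_congr fun x => and_congr_right fun hx =>
    and_congr (iterate_eq_mul_pow_iff hξ0 hφ hx n c₁ d₃) (iterate_eq_mul_pow_iff hξ0 hψ hx n c₂ d₃)
end

section
/- Define f : ℂ⁵ → ℂ⁵ by f(x₁, x₂, x₃, x₄, x₅) = (x₁ + 1, x₂·(x₃ − x₁ − 1), x₃, x₄·(x₅ − x₁ − 1), x₅). Let Z = { (x₁,…,x₅) ∈ ℂ⁵ : x₁ = 0, x₂ = 1, x₄ = 1 } and V = { (x₁,…,x₅) ∈ ℂ⁵ : x₂ = 0, x₄ = 0, x₁ = (x₃ + 1)·(x₅ + 1) }. Then { n ∈ ℕ : there exists z ∈ Z with f^n(z) ∈ V } equals the set of composite numbers { n ∈ ℕ : there exist natural numbers a ≥ 2 and b ≥ 2 with n = a·b }. -/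
/-!
Started at `(0, 1, c, 1, e)`, the map counts time in its first coordinate, while the second and
fourth coordinates accumulate the products `∏_{k<n} (c - k - 1)` and `∏_{k<n} (e - k - 1)`.
These vanish at time `n` exactly when `c, e ∈ {1, …, n}`, so landing in `V` at time `n` means
`n = (c + 1)(e + 1)` for positive integers `c, e`, i.e. `n` is composite.
-/

open Finset Function

variable {R : Type*} [CommRing R]

def leeNamMap (x : R × R × R × R × R) : R × R × R × R × R :=
  (x.1 + 1, x.2.1 * (x.2.2.1 - x.1 - 1), x.2.2.1, x.2.2.2.1 * (x.2.2.2.2 - x.1 - 1), x.2.2.2.2)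

theorem iterate_leeNamMap (c e : R) (n : ℕ) :
    leeNamMap^[n] (0, 1, c, 1, e) =
      ((n : R), ∏ k ∈ range n, (c - k - 1), c, ∏ k ∈ range n, (e - k - 1), e) := by
  induction n with
  | zero => simp
  | succ n ih =>
    rw [iterate_succ_apply', ih, leeNamMap]
    push_cast
    rw [prod_range_succ, prod_range_succ]

theorem prod_range_sub_sub_one_eq_zero_iff [IsDomain R] (c : R) (n : ℕ) :
    ∏ k ∈ range n, (c - k - 1) = 0 ↔ ∃ k < n, c = k + 1 := by
  simp only [prod_eq_zero_iff, mem_range, sub_sub, sub_eq_zero]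

theorem exists_prod_roots_and_cast_eq_iff [IsDomain R] [CharZero R] (n : ℕ) :
    (∃ c e : R, ∏ k ∈ range n, (c - k - 1) = 0 ∧ ∏ k ∈ range n, (e - k - 1) = 0 ∧
      (n : R) = (c + 1) * (e + 1)) ↔ ∃ a b : ℕ, 2 ≤ a ∧ 2 ≤ b ∧ n = a * b := by
  simp only [prod_range_sub_sub_one_eq_zero_iff]
  constructor
  · rintro ⟨c, e, ⟨k, -, rfl⟩, ⟨l, -, rfl⟩, hn⟩
    have : (n : R) = ((k + 2) * (l + 2) : ℕ) := by
      rw [hn]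
      push_cast
      ring
    exact ⟨k + 2, l + 2, by omega, by omega, Nat.cast_injective this⟩
  · rintro ⟨a, b, ha, hb, rfl⟩
    obtain ⟨k, rfl⟩ : ∃ k, a = k + 2 := ⟨a - 2, by omega⟩
    obtain ⟨l, rfl⟩ : ∃ l, b = l + 2 := ⟨b - 2, by omega⟩
    refine ⟨k + 1, l + 1, ⟨k, by nlinarith, rfl⟩, ⟨l, by nlinarith, rfl⟩, ?_⟩
    push_cast
    ring

/-- Example of Lee–Nam: the return-time set equals the set of composite numbers. -/
theorem stmt18 (f : ℂ × ℂ × ℂ × ℂ × ℂ → ℂ × ℂ × ℂ × ℂ × ℂ)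
    (hf : ∀ x₁ x₂ x₃ x₄ x₅ : ℂ,
      f (x₁, x₂, x₃, x₄, x₅) =
        (x₁ + 1, x₂ * (x₃ - x₁ - 1), x₃, x₄ * (x₅ - x₁ - 1), x₅))
    (Z V : Set (ℂ × ℂ × ℂ × ℂ × ℂ))
    (hZ : Z = {p | p.1 = 0 ∧ p.2.1 = 1 ∧ p.2.2.2.1 = 1})
    (hV : V = {p | p.2.1 = 0 ∧ p.2.2.2.1 = 0 ∧
      p.1 = (p.2.2.1 + 1) * (p.2.2.2.2 + 1)}) :
    {n : ℕ | ∃ z ∈ Z, f^[n] z ∈ V} =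
      {n : ℕ | ∃ a b : ℕ, 2 ≤ a ∧ 2 ≤ b ∧ n = a * b} := by
  obtain rfl : f = leeNamMap := funext fun ⟨x₁, x₂, x₃, x₄, x₅⟩ => hf x₁ x₂ x₃ x₄ x₅
  subst hZ hV
  ext n
  refine Iff.trans ?_ (exists_prod_roots_and_cast_eq_iff (R := ℂ) n)
  constructor
  · rintro ⟨⟨x₁, x₂, c, x₄, e⟩, ⟨rfl, rfl, rfl⟩, hv⟩
    rw [iterate_leeNamMap] at hv
    exact ⟨c, e, hv⟩
  · rintro ⟨c, e, hv⟩
    exact ⟨(0, 1, c, 1, e), ⟨rfl, rfl, rfl⟩, by rwa [iterate_leeNamMap]⟩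
end
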